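/- arXiv:2106.09254 — 6 statements merged into one kernel-verified Lean document; each statement's English description precedes it below -/
import Mathlib

section
/- Let m,ℓ ≥ 1 and λ,μ ∈ P_{m,ℓ} with μ_a ≤ λ_a for all a, and let n = |λ/μ|. Then the projection π restricts to a bijection from λ/μ onto the cylindric skew diagram λ̂/μ̂ := λ̂ ∖ μ̂, and for any bijection ε : λ/μ → {1,…,n}, the induced map ε∘(π|_{λ/μ})^{−1} : λ̂/μ̂ → {1,…,n} is a linear extension of λ̂/μ̂ (i.e. satisfies ε̄(x) < ε̄(y) whenever x ⊴ y and x ≠ y) if and only if ε ∈ RST_ℓ(λ/μ). In particular, the linear extensions of λ̂/μ̂ are in one-to-one correspondence with RST_ℓ(λ/μ). -/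
open scoped BigOperators

/-- A cell of the plane `ℤ²`. -/
abbrev Cell : Type := ℤ × ℤ

/-- The partial order `⊴` on `ℤ²`: `(a,b) ⊴ (a',b')` iff `a ≥ a'` and `b ≥ b'`. -/
def cellLE (u v : Cell) : Prop := v.1 ≤ u.1 ∧ v.2 ≤ u.2

/-- The cylinder `C_ω = ℤ²/ℤω`. -/
abbrev Cyl (ω : Cell) : Type := Cell ⧸ AddSubgroup.zmultiples ω

/-- The natural projection `π : ℤ² → C_ω`. -/
def pr (ω : Cell) : Cell → Cyl ω := QuotientAddGroup.mk

/-- The induced relation `⊴` on the cylinder: `x ⊴ y` iff some lifts satisfy `x̃ ⊴ ỹ`. -/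
def cylLE (ω : Cell) (x y : Cyl ω) : Prop :=
  ∃ u v : Cell, pr ω u = x ∧ pr ω v = y ∧ cellLE u v

/-- The hook of `x` in a diagram `Θ ⊆ ℤ²`. -/
def hookSet (Θ : Set Cell) (x : Cell) : Set Cell :=
  Θ ∩ ({y | ∃ k : ℤ, 0 ≤ k ∧ y = x + (k, 0)} ∪ {y | ∃ k : ℤ, 1 ≤ k ∧ y = x + (0, k)})

/-- The hook length of `x` in `Θ`. -/
noncomputable def hookLen (Θ : Set Cell) (x : Cell) : ℕ := (hookSet Θ x).ncard

/-- The hook length of a cell of the cylinder, computed via a lift. -/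
noncomputable def cylHook (ω : Cell) (Θ : Set Cell) (x : Cyl ω) : ℕ :=
  hookLen Θ (Quotient.out x)

/-- The `ℤω`-orbit of a cell. -/
def zline (ω y : Cell) : Set Cell := {z | ∃ k : ℤ, z = y + k • ω}

/-- `S + ℤω`. -/
def perClosure (ω : Cell) (S : Set Cell) : Set Cell := {z | ∃ y ∈ S, ∃ k : ℤ, z = y + k • ω}

/-- Translation of a set of cells by `u`. -/
def shiftSet (u : Cell) (S : Set Cell) : Set Cell := (· + u) '' S

/-- The semi-infinite diagram `λ̄ = {(a,b) : 1 ≤ a ≤ m, b ≤ λ_a}`. -/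
def lowerDiag (m : ℤ) (lam : ℤ → ℤ) : Set Cell := {p | 1 ≤ p.1 ∧ p.1 ≤ m ∧ p.2 ≤ lam p.1}

/-- The Young diagram `{(a,b) : 1 ≤ a ≤ m, 1 ≤ b ≤ λ_a}`. -/
def youngDiag (m : ℤ) (lam : ℤ → ℤ) : Set Cell :=
  {p | 1 ≤ p.1 ∧ p.1 ≤ m ∧ 1 ≤ p.2 ∧ p.2 ≤ lam p.1}

/-- The skew diagram `λ/μ = {(a,b) : 1 ≤ a ≤ m, μ_a < b ≤ λ_a}`. -/
def skewDiag (m : ℤ) (lam mu : ℤ → ℤ) : Set Cell :=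
  {p | 1 ≤ p.1 ∧ p.1 ≤ m ∧ mu p.1 < p.2 ∧ p.2 ≤ lam p.1}

/-- The periodic diagram `λ̃ = λ̄ + ℤ(m,−ℓ)`. -/
def perDiag (m l : ℤ) (lam : ℤ → ℤ) : Set Cell := perClosure (m, -l) (lowerDiag m lam)

/-- The cylindric diagram `λ̂ = π(λ̃)`. -/
def cylDiag (m l : ℤ) (lam : ℤ → ℤ) : Set (Cyl (m, -l)) := pr (m, -l) '' perDiag m l lam

/-- `λ ∈ P_{m,ℓ}`: an `ℓ`-restricted generalized partition of length `m`
(only the values `λ_1, …, λ_m` are relevant). -/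
def IsRestricted (m l : ℤ) (lam : ℤ → ℤ) : Prop :=
  (∀ a : ℤ, 1 ≤ a → a < m → lam (a + 1) ≤ lam a) ∧ lam 1 - lam m ≤ l

/-- `y` is a `D`-active cell (with ambient diagram `Θ`). -/
def IsActive (Θ D : Set Cell) (y : Cell) : Prop :=
  y ∈ D ∧ y + (1, 0) ∈ Θ \ D ∧ y + (0, 1) ∈ Θ \ D ∧ y + (1, 1) ∈ Θ \ D

/-- One elementary excitation inside `Θ`. -/
def exciteStep (Θ D E : Set Cell) : Prop :=
  ∃ y, IsActive Θ D y ∧ E = (D \ {y}) ∪ {y + (1, 1)}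

/-- The excited diagrams of `M` in `Θ`. -/
def ExcitedSet (Θ M : Set Cell) : Set (Set Cell) :=
  {D | Relation.ReflTransGen (exciteStep Θ) M D}

/-- One periodic elementary excitation inside `Θ`. -/
def pExciteStep (ω : Cell) (Θ D E : Set Cell) : Prop :=
  ∃ y, IsActive Θ D y ∧ E = (D \ zline ω y) ∪ zline ω (y + (1, 1))

/-- The periodic excited diagrams of `M` in `Θ`. -/
def PExcitedSet (ω : Cell) (Θ M : Set Cell) : Set (Set Cell) :=
  {D | Relation.ReflTransGen (pExciteStep ω Θ) M D}

/-- The cylindric excited diagrams: images under `π` of the periodic excited diagrams. -/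
def CylExcitedSet (ω : Cell) (Θ M : Set Cell) : Set (Set (Cyl ω)) :=
  (fun D => pr ω '' D) '' PExcitedSet ω Θ M

/-- A linear extension of `S` (with respect to a relation `R`): a bijection
`ε : S → {1,…,n}` with `ε x < ε y` whenever `R x y` and `x ≠ y`. -/
def IsLinExt {α : Type} (R : α → α → Prop) (S : Set α) (n : ℕ) (ε : S → Fin n) : Prop :=
  Function.Bijective ε ∧ ∀ x y : S, R (x : α) (y : α) → (x : α) ≠ (y : α) → ε x < ε y

/-- The number of linear extensions of `S`. -/
noncomputable def linExtCount {α : Type} (R : α → α → Prop) (S : Set α) (n : ℕ) : ℕ :=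
  Nat.card {ε : S → Fin n // IsLinExt R S n ε}

/-- A reverse standard tableau on a (skew) diagram `S` of `n` cells. -/
def IsRST (S : Set Cell) (n : ℕ) (ε : S → Fin n) : Prop :=
  Function.Bijective ε ∧
    (∀ x y : S, (y : Cell) = (x : Cell) + (0, 1) → ε y < ε x) ∧
    (∀ x y : S, (y : Cell) = (x : Cell) + (1, 0) → ε y < ε x)

/-- An `ℓ`-restricted reverse standard tableau on a skew diagram of length `m`. -/
def IsRSTl (m l : ℤ) (S : Set Cell) (n : ℕ) (ε : S → Fin n) : Prop :=
  IsRST S n ε ∧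
    ∀ x y : S, (x : Cell).1 = 1 → (y : Cell) = (m, (x : Cell).2 - l) → ε x < ε y

/-- One lattice step: right by `(1,0)` or down by `(0,−1)`. -/
def stepRel (a b : Cell) : Prop := b - a = (1, 0) ∨ b - a = (0, -1)

/-- `p` is (the list of cells of) a lattice path from `u` to `v`. -/
def IsLatticePathList (u v : Cell) (p : List Cell) : Prop :=
  p.head? = some u ∧ p.getLast? = some v ∧ p.Chain' stepRel

/-- `L(u,v)`: lattice paths from `u` to `v`, identified with their underlying sets of cells. -/
def LPath (u v : Cell) : Set (Set Cell) :=
  {S | ∃ p : List Cell, IsLatticePathList u v p ∧ S = {x | x ∈ p}}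

/-- `L_Θ(u,v)`: lattice paths from `u` to `v` contained in `Θ`. -/
def LPathIn (Θ : Set Cell) (u v : Cell) : Set (Set Cell) := {S | S ∈ LPath u v ∧ S ⊆ Θ}

/-- One lattice step on the cylinder. -/
def cylStep (ω : Cell) (x y : Cyl ω) : Prop :=
  ∃ u v : Cell, pr ω u = x ∧ pr ω v = y ∧ stepRel u v

/-- `S` is a non-intersecting loop of length `n` in the cylinder. -/
def IsNILoop (ω : Cell) (n : ℕ) (S : Set (Cyl ω)) : Prop :=
  ∃ u : ZMod n → Cyl ω, Function.Injective u ∧ S = Set.range u ∧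
    ∀ i : ZMod n, cylStep ω (u i) (u (i + 1))

/-- `h^{s,t}_{m,ℓ}(x) = ℓ+m−a−b+dt+s+1` where `x = (a, b−dℓ)` with `2 ≤ b ≤ ℓ+1`, `d ≥ 0`. -/
def hst (m l s t : ℤ) (x : Cell) : ℤ :=
  l + m - x.1 - x.2 + ((l + 1 - x.2) / l) * (t - l) + s + 1

/-- The hook lengths `h_i` of the bar case: `h_{ℓt+j} = (ℓ+1)t+j = i + (i−1)/ℓ`. -/
def hbar (l i : ℤ) : ℤ := i + (i - 1) / l

private lemma smul_om (m l k : ℤ) : k • ((m, -l) : Cell) = (k * m, -(k * l)) := by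
  have h : (k • ((m, -l) : Cell)) = (k • m, k • (-l)) := rfl
  rw [h]; simp [zsmul_eq_mul, mul_neg]

private lemma pr_eq_iff (m l : ℤ) (u v : Cell) :
    pr (m, -l) u = pr (m, -l) v ↔ ∃ k : ℤ, v = u + k • ((m, -l) : Cell) := by
  unfold pr
  rw [QuotientAddGroup.eq]
  constructor
  · intro h
    rcases AddSubgroup.mem_zmultiples_iff.1 h with ⟨k, hk⟩
    exact ⟨k, by rw [hk]; abel⟩
  · rintro ⟨k, rfl⟩
    exact AddSubgroup.mem_zmultiples_iff.2 ⟨k, by abel⟩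

private lemma k_zero {m k a a' : ℤ} (hm : 1 ≤ m) (h1 : 1 ≤ a) (h2 : a ≤ m)
    (h3 : 1 ≤ a') (h4 : a' ≤ m) (h : a' = a + k * m) : k = 0 := by
  rcases lt_trichotomy k 0 with hk | hk | hk
  · have : k * m ≤ (-1) * m := mul_le_mul_of_nonneg_right (by omega) (by omega)
    omega
  · exact hk
  · have : 1 * m ≤ k * m := mul_le_mul_of_nonneg_right (by omega) (by omega)
    omega

private lemma mem_cylDiag {m l : ℤ} {lam : ℤ → ℤ} {x : Cell} :
    pr (m, -l) x ∈ cylDiag m l lam ↔ x ∈ perDiag m l lam := by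
  constructor
  · rintro ⟨x', hx', hpx⟩
    rcases (pr_eq_iff m l x' x).1 hpx with ⟨k, hk⟩
    rcases hx' with ⟨y, hy, k', hk'⟩
    exact ⟨y, hy, k' + k, by rw [hk, hk', add_zsmul]; abel⟩
  · intro h; exact ⟨x, h, rfl⟩

private lemma perDiag_strip {m l : ℤ} (hm : 1 ≤ m) {lam : ℤ → ℤ} {x : Cell}
    (h1 : 1 ≤ x.1) (h2 : x.1 ≤ m) : x ∈ perDiag m l lam ↔ x ∈ lowerDiag m lam := by
  constructor
  · rintro ⟨y, hy, k, hk⟩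
    rw [smul_om] at hk
    obtain ⟨hy1, hy2, hy3⟩ := hy
    have hx1 : x.1 = y.1 + k * m := by rw [hk]; rfl
    have hk0 : k = 0 := k_zero hm hy1 hy2 h1 h2 hx1
    rw [hk0] at hk
    simp only [zero_mul, neg_zero] at hk
    have : x = y := by rw [hk]; exact Prod.ext (by simp) (by simp)
    rw [this]; exact ⟨hy1, hy2, hy3⟩
  · intro h; exact ⟨x, h, 0, by simp⟩

private lemma anti_of_step {m : ℤ} {f : ℤ → ℤ}
    (h : ∀ a : ℤ, 1 ≤ a → a < m → f (a + 1) ≤ f a) :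
    ∀ (d : ℕ) (a b : ℤ), 1 ≤ a → a ≤ b → b ≤ m → (b - a).toNat = d → f b ≤ f a := by
  intro d
  induction d with
  | zero =>
    intro a b _ hab _ hd
    have hab' : a = b := by omega
    rw [hab']
  | succ d ih =>
    intro a b ha hab hbm hd
    have h1 : f (a + 1) ≤ f a := h a ha (by omega)
    have h2 : f b ≤ f (a + 1) := ih (a + 1) b (by omega) (by omega) hbm (by omega)
    exact le_trans h2 h1

private lemma anti' {m : ℤ} {f : ℤ → ℤ}
    (h : ∀ a : ℤ, 1 ≤ a → a < m → f (a + 1) ≤ f a)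
    {a b : ℤ} (ha : 1 ≤ a) (hab : a ≤ b) (hbm : b ≤ m) : f b ≤ f a :=
  anti_of_step h (b - a).toNat a b ha hab hbm rfl
private lemma chain_zero {m : ℤ} {lam mu : ℤ → ℤ}
    (hlamA : ∀ a b : ℤ, 1 ≤ a → a ≤ b → b ≤ m → lam b ≤ lam a)
    (hmuA : ∀ a b : ℤ, 1 ≤ a → a ≤ b → b ≤ m → mu b ≤ mu a)
    {n : ℕ} {ε : ↥(skewDiag m lam mu) → Fin n}
    (hcol : ∀ x y : ↥(skewDiag m lam mu), (y : Cell) = (x : Cell) + (0, 1) → ε y < ε x)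
    (hrow : ∀ x y : ↥(skewDiag m lam mu), (y : Cell) = (x : Cell) + (1, 0) → ε y < ε x) :
    ∀ (d : ℕ) (x y : ↥(skewDiag m lam mu)),
      (y : Cell).1 ≤ (x : Cell).1 → (y : Cell).2 ≤ (x : Cell).2 →
      ((x : Cell).1 - (y : Cell).1 + (x : Cell).2 - (y : Cell).2).toNat = d →
      x = y ∨ ε x < ε y := by
  intro d
  induction d using Nat.strong_induction_on with
  | _ d ih =>
    intro x y h1 h2 hd
    obtain ⟨hxa1, hxa2, hxb1, hxb2⟩ := x.2
    obtain ⟨hya1, hya2, hyb1, hyb2⟩ := y.2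
    by_cases hxy : (x : Cell) = (y : Cell)
    · exact Or.inl (Subtype.ext hxy)
    rcases lt_or_eq_of_le h2 with h2' | h2'
    · -- step down in the row
      have hmu' : mu (x : Cell).1 ≤ mu (y : Cell).1 := hmuA _ _ hya1 h1 hxa2
      have hx' : ((x : Cell).1, (x : Cell).2 - 1) ∈ skewDiag m lam mu :=
        ⟨hxa1, hxa2, by dsimp only; omega, by dsimp only; omega⟩
      have hstep : ε x < ε ⟨((x : Cell).1, (x : Cell).2 - 1), hx'⟩ := by
        apply hcol
        exact Prod.ext (by simp) (by simp)
      have hrec := ih (((x : Cell).1 - (y : Cell).1 + ((x : Cell).2 - 1) - (y : Cell).2)).toNat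
        (by omega) ⟨((x : Cell).1, (x : Cell).2 - 1), hx'⟩ y h1 (by dsimp only; omega) (by dsimp only)
      rcases hrec with heq | hlt
      · exact Or.inr (heq ▸ hstep)
      · exact Or.inr (lt_trans hstep hlt)
    · -- same column, step up the rows
      have h1' : (y : Cell).1 < (x : Cell).1 := by
        rcases lt_or_eq_of_le h1 with h | h
        · exact h
        · exact absurd (Prod.ext h.symm h2'.symm) hxy
      have hmu' : mu ((x : Cell).1 - 1) ≤ mu (y : Cell).1 := hmuA _ _ hya1 (by omega) (by omega)
      have hlam' : lam (x : Cell).1 ≤ lam ((x : Cell).1 - 1) := hlamA _ _ (by omega) (by omega) hxa2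
      have hx' : ((x : Cell).1 - 1, (x : Cell).2) ∈ skewDiag m lam mu :=
        ⟨by dsimp only; omega, by dsimp only; omega, by dsimp only; omega, by dsimp only; omega⟩
      have hstep : ε x < ε ⟨((x : Cell).1 - 1, (x : Cell).2), hx'⟩ := by
        apply hrow
        exact Prod.ext (by simp) (by simp)
      have hrec := ih ((((x : Cell).1 - 1) - (y : Cell).1 + (x : Cell).2 - (y : Cell).2)).toNat
        (by omega) ⟨((x : Cell).1 - 1, (x : Cell).2), hx'⟩ y (by dsimp only; omega) (by dsimp only; omega)
        (by dsimp only)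
      rcases hrec with heq | hlt
      · exact Or.inr (heq ▸ hstep)
      · exact Or.inr (lt_trans hstep hlt)
private lemma chain_main {m l : ℤ} (hm : 1 ≤ m) (hl : 1 ≤ l) {lam mu : ℤ → ℤ}
    (hlam : IsRestricted m l lam) (hmu : IsRestricted m l mu)
    {n : ℕ} {ε : ↥(skewDiag m lam mu) → Fin n}
    (hrst : IsRSTl m l (skewDiag m lam mu) n ε) :
    ∀ (j : ℕ) (x y : ↥(skewDiag m lam mu)),
      (j = 0 → (y : Cell).1 ≤ (x : Cell).1) → (y : Cell).2 + (j : ℤ) * l ≤ (x : Cell).2 →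
      x = y ∨ ε x < ε y := by
  have hlamA : ∀ a b : ℤ, 1 ≤ a → a ≤ b → b ≤ m → lam b ≤ lam a := fun a b ha hab hbm =>
    anti' hlam.1 ha hab hbm
  have hmuA : ∀ a b : ℤ, 1 ≤ a → a ≤ b → b ≤ m → mu b ≤ mu a := fun a b ha hab hbm =>
    anti' hmu.1 ha hab hbm
  have hcz := chain_zero hlamA hmuA hrst.1.2.1 hrst.1.2.2
  intro j
  induction j with
  | zero =>
    intro x y h1 h2
    exact hcz _ x y (h1 rfl) (by simpa using h2) rfl
  | succ j ih =>
    intro x y _ h2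
    obtain ⟨hxa1, hxa2, hxb1, hxb2⟩ := x.2
    obtain ⟨hya1, hya2, hyb1, hyb2⟩ := y.2
    have hjl : 0 ≤ (j : ℤ) * l := mul_nonneg (by positivity) (by omega)
    have h2' : (y : Cell).2 + (j : ℤ) * l + l ≤ (x : Cell).2 := by push_cast at h2; linarith
    have hmum : mu m ≤ mu (y : Cell).1 := hmuA _ _ hya1 hya2 le_rfl
    have hlam1 : lam (x : Cell).1 ≤ lam 1 := hlamA _ _ le_rfl hxa1 hxa2
    have hlamm : lam (y : Cell).1 ≤ lam 1 := hlamA _ _ le_rfl hya1 hya2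
    -- z = (1, x.2) ∈ skew
    have hz : ((1 : ℤ), (x : Cell).2) ∈ skewDiag m lam mu := by
      refine ⟨le_rfl, hm, ?_, ?_⟩
      · dsimp only
        have := hmu.2
        omega
      · dsimp only
        omega
    -- z' = (m, x.2 - l) ∈ skew
    have hz' : ((m : ℤ), (x : Cell).2 - l) ∈ skewDiag m lam mu := by
      refine ⟨hm, le_rfl, ?_, ?_⟩
      · dsimp only; omega
      · dsimp only
        have := hlam.2
        omega
    have hxz : x = ⟨((1 : ℤ), (x : Cell).2), hz⟩ ∨ ε x < ε ⟨((1 : ℤ), (x : Cell).2), hz⟩ :=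
      hcz _ x ⟨((1 : ℤ), (x : Cell).2), hz⟩ (by dsimp only; omega) le_rfl rfl
    have hzz' : ε ⟨((1 : ℤ), (x : Cell).2), hz⟩ < ε ⟨((m : ℤ), (x : Cell).2 - l), hz'⟩ :=
      hrst.2 _ _ rfl rfl
    have hrec := ih ⟨((m : ℤ), (x : Cell).2 - l), hz'⟩ y (fun _ => by dsimp only; omega)
      (by dsimp only; omega)
    have hxlt : ε x < ε ⟨((m : ℤ), (x : Cell).2 - l), hz'⟩ := by
      rcases hxz with h | h
      · exact lt_of_le_of_lt (le_of_eq (congrArg ε h)) hzz'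
      · exact lt_trans h hzz'
    rcases hrec with heq | hlt
    · exact Or.inr (heq ▸ hxlt)
    · exact Or.inr (lt_trans hxlt hlt)
private noncomputable def eEquiv (m l : ℕ) (lam mu : ℤ → ℤ)
    (hbij : Set.BijOn (pr ((m : ℤ), -(l : ℤ))) (skewDiag m lam mu)
      (cylDiag m l lam \ cylDiag m l mu)) :
    ↥(skewDiag (m : ℤ) lam mu) ≃ ↥(cylDiag m l lam \ cylDiag m l mu) :=
  Equiv.ofBijective (fun x => ⟨pr ((m : ℤ), -(l : ℤ)) (x : Cell), hbij.mapsTo x.2⟩)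
    ⟨fun a b h => Subtype.ext (hbij.injOn a.2 b.2 (congrArg Subtype.val h)),
     fun w => by rcases hbij.surjOn w.2 with ⟨x, hx, hpx⟩; exact ⟨⟨x, hx⟩, Subtype.ext hpx⟩⟩

private lemma bij_skew (m l : ℕ) (hm : 1 ≤ m) (lam mu : ℤ → ℤ) :
    Set.BijOn (pr ((m : ℤ), -(l : ℤ))) (skewDiag m lam mu)
      (cylDiag m l lam \ cylDiag m l mu) := by
  have hmZ : (1 : ℤ) ≤ (m : ℤ) := by exact_mod_cast hm
  refine ⟨?_, ?_, ?_⟩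
  · rintro x ⟨h1, h2, h3, h4⟩
    constructor
    · exact mem_cylDiag.2 ⟨x, ⟨h1, h2, h4⟩, 0, by simp⟩
    · intro hc
      have hx := (perDiag_strip hmZ h1 h2).1 (mem_cylDiag.1 hc)
      exact absurd hx.2.2 (by omega)
  · intro a ha b hb hab
    rcases (pr_eq_iff _ _ a b).1 hab with ⟨k, hk⟩
    have hb1 : b.1 = a.1 + k * (m : ℤ) := by rw [hk, smul_om]; rfl
    have hk0 : k = 0 := k_zero hmZ ha.1 ha.2.1 hb.1 hb.2.1 hb1
    rw [hk0] at hk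
    simpa using hk.symm
  · rintro z ⟨⟨x, hx, hpx⟩, hnot⟩
    rcases hx with ⟨y, hy, k, hk⟩
    have hpy : pr ((m : ℤ), -(l : ℤ)) y = z := by
      rw [← hpx]; exact ((pr_eq_iff _ _ y x).2 ⟨k, hk⟩)
    refine ⟨y, ⟨hy.1, hy.2.1, ?_, hy.2.2⟩, hpy⟩
    by_contra hmu'
    exact hnot (hpy ▸ mem_cylDiag.2 ⟨y, ⟨hy.1, hy.2.1, by omega⟩, 0, by simp⟩)
/-- Linear extensions of a cylindric skew diagram correspond to `ℓ`-restricted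
reverse standard tableaux on the fundamental-domain skew diagram. -/
theorem cyl_linear_extensions_eq_restricted_rst (m l : ℕ) (hm : 1 ≤ m) (hl : 1 ≤ l)
    (lam mu : ℤ → ℤ)
    (hlam : IsRestricted m l lam) (hmu : IsRestricted m l mu)
    (hsub : ∀ a : ℤ, 1 ≤ a → a ≤ (m : ℤ) → mu a ≤ lam a)
    (n : ℕ) (hn : (skewDiag m lam mu).ncard = n) :
    Set.BijOn (pr ((m : ℤ), -(l : ℤ))) (skewDiag m lam mu)
      (cylDiag m l lam \ cylDiag m l mu) ∧
    (∀ (ε : ↥(skewDiag (m : ℤ) lam mu) → Fin n)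
        (ε' : ↥(cylDiag m l lam \ cylDiag m l mu) → Fin n),
      Function.Bijective ε →
      (∀ (x : ↥(skewDiag (m : ℤ) lam mu))
          (h : pr ((m : ℤ), -(l : ℤ)) (x : Cell) ∈ cylDiag m l lam \ cylDiag m l mu),
        ε' ⟨pr ((m : ℤ), -(l : ℤ)) (x : Cell), h⟩ = ε x) →
      (IsLinExt (cylLE ((m : ℤ), -(l : ℤ))) (cylDiag m l lam \ cylDiag m l mu) n ε' ↔
        IsRSTl m l (skewDiag m lam mu) n ε)) ∧
    Nat.card {ε' : ↥(cylDiag m l lam \ cylDiag m l mu) → Fin n //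
        IsLinExt (cylLE ((m : ℤ), -(l : ℤ))) (cylDiag m l lam \ cylDiag m l mu) n ε'} =
      Nat.card {ε : ↥(skewDiag (m : ℤ) lam mu) → Fin n //
        IsRSTl m l (skewDiag m lam mu) n ε} := by
  have hmZ : (1 : ℤ) ≤ (m : ℤ) := by exact_mod_cast hm
  have hlZ : (1 : ℤ) ≤ (l : ℤ) := by exact_mod_cast hl
  have hbij := bij_skew m l hm lam mu
  have hmemT : ∀ x : ↥(skewDiag (m : ℤ) lam mu),
      pr ((m : ℤ), -(l : ℤ)) (x : Cell) ∈ cylDiag m l lam \ cylDiag m l mu :=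
    fun x => hbij.mapsTo x.2
  have hiff : ∀ (ε : ↥(skewDiag (m : ℤ) lam mu) → Fin n)
      (ε' : ↥(cylDiag m l lam \ cylDiag m l mu) → Fin n),
      Function.Bijective ε →
      (∀ (x : ↥(skewDiag (m : ℤ) lam mu))
          (h : pr ((m : ℤ), -(l : ℤ)) (x : Cell) ∈ cylDiag m l lam \ cylDiag m l mu),
        ε' ⟨pr ((m : ℤ), -(l : ℤ)) (x : Cell), h⟩ = ε x) →
      (IsLinExt (cylLE ((m : ℤ), -(l : ℤ))) (cylDiag m l lam \ cylDiag m l mu) n ε' ↔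
        IsRSTl m l (skewDiag m lam mu) n ε) := by
    intro ε ε' hε hcompat
    have hee : ∀ x, ε' (eEquiv m l lam mu hbij x) = ε x := fun x => hcompat x (hmemT x)
    constructor
    · intro hlin
      refine ⟨⟨hε, ?_, ?_⟩, ?_⟩
      · -- column condition
        intro x y hxy
        have hle : cylLE ((m : ℤ), -(l : ℤ))
            (pr ((m : ℤ), -(l : ℤ)) (y : Cell)) (pr ((m : ℤ), -(l : ℤ)) (x : Cell)) :=
          ⟨(y : Cell), (x : Cell), rfl, rfl, by
            rw [hxy]; exact ⟨by simp, by simp⟩⟩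
        have hne : pr ((m : ℤ), -(l : ℤ)) (y : Cell) ≠ pr ((m : ℤ), -(l : ℤ)) (x : Cell) := by
          intro h
          have h2 := congrArg Prod.snd (hbij.injOn y.2 x.2 h)
          rw [hxy] at h2
          simp at h2
        have hfin := hlin.2 ⟨_, hmemT y⟩ ⟨_, hmemT x⟩ hle hne
        rwa [hcompat, hcompat] at hfin
      · -- row condition
        intro x y hxy
        have hle : cylLE ((m : ℤ), -(l : ℤ))
            (pr ((m : ℤ), -(l : ℤ)) (y : Cell)) (pr ((m : ℤ), -(l : ℤ)) (x : Cell)) :=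
          ⟨(y : Cell), (x : Cell), rfl, rfl, by
            rw [hxy]; exact ⟨by simp, by simp⟩⟩
        have hne : pr ((m : ℤ), -(l : ℤ)) (y : Cell) ≠ pr ((m : ℤ), -(l : ℤ)) (x : Cell) := by
          intro h
          have h2 := congrArg Prod.fst (hbij.injOn y.2 x.2 h)
          rw [hxy] at h2
          simp at h2
        have hfin := hlin.2 ⟨_, hmemT y⟩ ⟨_, hmemT x⟩ hle hne
        rwa [hcompat, hcompat] at hfin
      · -- restriction condition
        intro x y hx1 hy
        have hle : cylLE ((m : ℤ), -(l : ℤ))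
            (pr ((m : ℤ), -(l : ℤ)) (x : Cell)) (pr ((m : ℤ), -(l : ℤ)) (y : Cell)) := by
          refine ⟨(x : Cell), ((0 : ℤ), (x : Cell).2), rfl, ?_, ?_, ?_⟩
          · refine ((pr_eq_iff _ _ _ _).2 ⟨-1, ?_⟩).symm
            rw [smul_om, hy]
            refine Prod.ext ?_ ?_ <;> simp
          · dsimp only; omega
          · exact le_rfl
        have hne : pr ((m : ℤ), -(l : ℤ)) (x : Cell) ≠ pr ((m : ℤ), -(l : ℤ)) (y : Cell) := by
          intro h
          have h2 := congrArg Prod.snd (hbij.injOn x.2 y.2 h)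
          rw [hy] at h2
          dsimp only at h2
          omega
        have hfin := hlin.2 ⟨_, hmemT x⟩ ⟨_, hmemT y⟩ hle hne
        rwa [hcompat, hcompat] at hfin
    · intro hrst
      constructor
      · have hd : ε' = fun w => ε ((eEquiv m l lam mu hbij).symm w) := by
          funext w
          calc ε' w = ε' ((eEquiv m l lam mu hbij) ((eEquiv m l lam mu hbij).symm w)) := by
                rw [Equiv.apply_symm_apply]
          _ = ε ((eEquiv m l lam mu hbij).symm w) := hee _
        rw [hd]
        exact hε.comp (eEquiv m l lam mu hbij).symm.bijective
      · rintro zs ws ⟨u, v, hu, hv, huv⟩ hne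
        rcases hbij.surjOn zs.2 with ⟨x, hx, hpx⟩
        rcases hbij.surjOn ws.2 with ⟨y, hy, hpy⟩
        rcases (pr_eq_iff _ _ x u).1 (hpx.trans hu.symm) with ⟨a, hua⟩
        rcases (pr_eq_iff _ _ y v).1 (hpy.trans hv.symm) with ⟨b, hvb⟩
        have h1 : y.1 + b * (m : ℤ) ≤ x.1 + a * (m : ℤ) := by
          have hc := huv.1
          rw [hua, hvb, smul_om, smul_om] at hc
          simpa using hc
        have h2 : y.2 + a * (l : ℤ) ≤ x.2 + b * (l : ℤ) := by
          have hc := huv.2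
          rw [hua, hvb, smul_om, smul_om] at hc
          simp only [Prod.snd_add] at hc
          linarith
        obtain ⟨hx1, hx2, hx3, hx4⟩ := hx
        obtain ⟨hy1, hy2, hy3, hy4⟩ := hy
        have hk : 0 ≤ a - b := by
          by_contra hab
          have hmm : 1 * (m : ℤ) ≤ (b - a) * (m : ℤ) :=
            mul_le_mul_of_nonneg_right (by omega) (by omega)
          rw [sub_mul] at hmm
          linarith
        have hchain := chain_main hmZ hlZ hlam hmu hrst (a - b).toNat
          ⟨x, hx1, hx2, hx3, hx4⟩ ⟨y, hy1, hy2, hy3, hy4⟩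
          (by
            intro hj
            have hab : a = b := by omega
            rw [hab] at h1
            dsimp only
            linarith)
          (by
            have hcast : (((a - b).toNat : ℤ)) = a - b := Int.toNat_of_nonneg hk
            rw [hcast]
            dsimp only
            rw [sub_mul]
            linarith)
        rcases hchain with heq | hlt
        · exfalso
          apply hne
          have hxy : x = y := congrArg Subtype.val heq
          rw [← hpx, ← hpy, hxy]
        · have hz : zs = eEquiv m l lam mu hbij ⟨x, hx1, hx2, hx3, hx4⟩ :=
            Subtype.ext hpx.symm
          have hw : ws = eEquiv m l lam mu hbij ⟨y, hy1, hy2, hy3, hy4⟩ :=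
            Subtype.ext hpy.symm
          rw [hz, hw, hee, hee]
          exact hlt
  refine ⟨hbij, hiff, ?_⟩
  apply Nat.card_congr
  exact
    { toFun := fun p =>
        ⟨fun x => p.1 (eEquiv m l lam mu hbij x),
         (hiff _ p.1 (p.2.1.comp (eEquiv m l lam mu hbij).bijective)
           (fun _ _ => rfl)).mp p.2⟩
      invFun := fun q =>
        ⟨fun w => q.1 ((eEquiv m l lam mu hbij).symm w),
         (hiff q.1 _ q.2.1.1
           (fun x _ => congrArg q.1 ((eEquiv m l lam mu hbij).symm_apply_apply x))).mpr q.2⟩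
      left_inv := fun p =>
        Subtype.ext (funext fun w => congrArg p.1 ((eEquiv m l lam mu hbij).apply_symm_apply w))
      right_inv := fun q =>
        Subtype.ext (funext fun x => congrArg q.1 ((eEquiv m l lam mu hbij).symm_apply_apply x)) }
end

section
/- Let n,ℓ ≥ 1 and write n = q(ℓ+1)+r with q ≥ 0 and 0 ≤ r ≤ ℓ. Then the family (Π_{v=1}^q Π_{u=0}^ℓ 1/h_{i_v+u})_{(i_1,…,i_q) ∈ E_{ℓ;n}} is summable, and n! · (Π_{i=1}^r h_i)^{−1} · Σ_{(i_1,…,i_q) ∈ E_{ℓ;n}} Π_{v=1}^q Π_{u=0}^ℓ 1/h_{i_v+u} = 1. -/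
open scoped BigOperators

/-- The index set `E_{ℓ;n}` of the bar case. -/
def BarIndex (l q r : ℕ) : Type :=
  {v : Fin q → ℤ //
    (∀ h : 0 < q, (r : ℤ) + 1 ≤ v ⟨0, h⟩) ∧
    ∀ (i : ℕ) (h : i + 1 < q),
      v ⟨i, Nat.lt_of_succ_lt h⟩ + (l : ℤ) + 1 ≤ v ⟨i + 1, h⟩}

/-- The summand `∏_{v=1}^q ∏_{u=0}^ℓ 1/h_{i_v+u}`. -/
noncomputable def barTerm (l q r : ℕ) (v : BarIndex l q r) : ℝ :=
  (∏ k : Fin q, ∏ u ∈ Finset.range (l + 1), ((hbar l (v.1 k + (u : ℤ))) : ℝ))⁻¹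

/-!
Write `P_W(j) = h_j h_{j+1} ⋯ h_{j+W-1}` (`hbarProd l W j`). Since `h_{i+ℓ} = h_i + ℓ + 1`,
`P_{kℓ+1}(j) = P_{kℓ}(j) (h_j + k(ℓ+1)) = h_j P_{kℓ}(j+1)`, i.e.
`1 / P_{kℓ+1}(j) = (1 / P_{kℓ}(j) - 1 / P_{kℓ}(j+1)) / (k(ℓ+1))`, so the sum over `j ≥ M`
telescopes to `1 / (k(ℓ+1) P_{kℓ}(M))`. Summing out the first index of `(i_1, …, i_q)` and
inducting on `q`, the sum over `E_{ℓ;n}` is `1 / (q! (ℓ+1)^q P_{qℓ}(r+1))`. Since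
`h_1, …, h_{qℓ+r}` are the integers in `[1, n]` not divisible by `ℓ + 1`,
`n! = P_{qℓ+r}(1) (ℓ+1)^q q!`, and `P_{qℓ+r}(1) = P_r(1) P_{qℓ}(r+1)`.
-/

open Finset Filter Topology
open scoped Nat

theorem hasSum_sigma_of_nonneg {α : Type*} {β : α → Type*} {f : (Σ x, β x) → ℝ}
    {g : α → ℝ} {a : ℝ} (hf : ∀ p, 0 ≤ f p) (hfg : ∀ x, HasSum (fun y => f ⟨x, y⟩) (g x))
    (hg : HasSum g a) : HasSum f a := by
  have hsum : Summable f := (summable_sigma_of_nonneg hf).2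
    ⟨fun x => (hfg x).summable, hg.summable.congr fun x => (hfg x).tsum_eq.symm⟩
  exact hg.unique (hsum.hasSum.sigma hfg) ▸ hsum.hasSum

theorem hasSum_sub_succ_of_antitone {G : ℕ → ℝ} {L : ℝ} (hG : Antitone G)
    (hlim : Tendsto G atTop (𝓝 L)) : HasSum (fun n => G n - G (n + 1)) (G 0 - L) := by
  rw [hasSum_iff_tendsto_nat_of_nonneg fun n => sub_nonneg.2 (hG n.le_succ)]
  simp_rw [sum_range_sub']
  exact tendsto_const_nhds.sub hlim

def natEquivIci (M : ℤ) : ℕ ≃ {j : ℤ // M ≤ j} where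
  toFun n := ⟨M + n, by omega⟩
  invFun j := (j.1 - M).toNat
  left_inv n := by simp
  right_inv j := Subtype.ext (by simp only; omega)

section BarHookLengths

variable {l : ℕ}

theorem le_hbar {i : ℤ} (hi : 1 ≤ i) : i ≤ hbar l i := by
  have := Int.ediv_nonneg (by omega : 0 ≤ i - 1) (Int.natCast_nonneg l)
  unfold hbar; omega

theorem hbar_add_mul (hl : 1 ≤ l) (i : ℤ) (k : ℕ) :
    hbar l (i + k * l) = hbar l i + k * (l + 1) := by
  unfold hbar
  rw [show i + k * l - 1 = i - 1 + k * l by ring, Int.add_mul_ediv_right _ _ (by omega)]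
  ring

theorem hbar_natCast_succ (m : ℕ) : hbar l (m + 1) = ((m + 1 + m / l : ℕ) : ℤ) := by
  simp [hbar]

noncomputable def hbarProd (l W : ℕ) (j : ℤ) : ℝ := ∏ u ∈ range W, (hbar l (j + u) : ℝ)

theorem hbarProd_add (A B : ℕ) (j : ℤ) :
    hbarProd l (A + B) j = hbarProd l A j * hbarProd l B (j + A) := by
  simp only [hbarProd, prod_range_add, Nat.cast_add, add_assoc]

theorem hbarProd_succ (W : ℕ) (j : ℤ) :
    hbarProd l (W + 1) j = hbarProd l W j * hbar l (j + W) := by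
  rw [hbarProd_add]; simp [hbarProd]

theorem hbarProd_succ' (W : ℕ) (j : ℤ) :
    hbarProd l (W + 1) j = hbar l j * hbarProd l W (j + 1) := by
  rw [add_comm, hbarProd_add]; simp [hbarProd]

theorem hbarProd_pos {j : ℤ} (hj : 1 ≤ j) (W : ℕ) : 0 < hbarProd l W j :=
  prod_pos fun u _ => by
    have := le_hbar (l := l) (by omega : 1 ≤ j + u)
    exact_mod_cast (by omega : 0 < hbar l (j + u))

theorem le_hbarProd {j : ℤ} (hj : 1 ≤ j) {W : ℕ} (hW : W ≠ 0) : (j : ℝ) ≤ hbarProd l W j := by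
  obtain ⟨W, rfl⟩ := Nat.exists_eq_succ_of_ne_zero hW
  have hW1 : (1 : ℝ) ≤ hbarProd l W (j + 1) := one_le_prod fun u _ => by
    exact_mod_cast (by omega : (1 : ℤ) ≤ j + 1 + u).trans (le_hbar (by omega))
  have hj' : (j : ℝ) ≤ hbar l j := by exact_mod_cast le_hbar hj
  have hj1 : (1 : ℝ) ≤ j := by exact_mod_cast hj
  rw [hbarProd_succ']
  exact hj'.trans (le_mul_of_one_le_right (by linarith) hW1)

theorem hbarProd_one_mul_factorial (m : ℕ) :
    hbarProd l m 1 * ((l + 1 : ℝ) ^ (m / l) * (m / l)!) = (m + m / l)! := by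
  induction m with
  | zero => simp [hbarProd]
  | succ m ih =>
    rw [hbarProd_succ, show (1 : ℤ) + m = m + 1 by ring, hbar_natCast_succ, Int.cast_natCast]
    by_cases hdvd : l ∣ m + 1
    · have hdiv : (m + 1) / l = m / l + 1 := by rw [Nat.succ_div, if_pos hdvd]
      have hs : (m + 1 : ℝ) = l * (↑(m / l) + 1) := by
        exact_mod_cast (by rw [← hdiv, Nat.mul_div_cancel' hdvd] : m + 1 = l * (m / l + 1))
      rw [hdiv, show m + 1 + (m / l + 1) = m + m / l + 1 + 1 by ring, Nat.factorial_succ,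
        Nat.factorial_succ]
      push_cast [pow_succ, Nat.factorial_succ] at ih ⊢
      linear_combination ((m : ℝ) + 1 + ↑(m / l)) * (l + 1) * (↑(m / l) + 1) * ih -
        ((m : ℝ) + 1 + ↑(m / l)) * ↑(m + m / l)! * hs
    · have hdiv : (m + 1) / l = m / l := by rw [Nat.succ_div, if_neg hdvd, add_zero]
      rw [hdiv, show m + 1 + m / l = m + m / l + 1 by ring, Nat.factorial_succ]
      push_cast at ih ⊢
      linear_combination ((m : ℝ) + 1 + ↑(m / l)) * ih

theorem factorial_eq_hbarProd_mul (hl : 1 ≤ l) {q r : ℕ} (hr : r ≤ l) :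
    ((q * (l + 1) + r)! : ℝ) = hbarProd l (q * l + r) 1 * ((l + 1 : ℝ) ^ q * q !) := by
  rcases hr.lt_or_eq with hr | rfl
  · have key := hbarProd_one_mul_factorial (l := l) (q * l + r)
    rw [show (q * l + r) / l = q by
      rw [add_comm, Nat.add_mul_div_right _ _ (by omega), Nat.div_eq_of_lt hr, zero_add]] at key
    rw [key, show q * l + r + q = q * (l + 1) + r by ring]
  · have key := hbarProd_one_mul_factorial (l := r) (q * r + r)
    rw [show (q * r + r) / r = q + 1 by
      rw [show q * r + r = (q + 1) * r by ring, Nat.mul_div_cancel _ (by omega)],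
      show q * r + r + (q + 1) = q * (r + 1) + r + 1 by ring, Nat.factorial_succ] at key
    push_cast [pow_succ, Nat.factorial_succ] at key ⊢
    have hne : ((q : ℝ) * (r + 1) + r + 1) ≠ 0 := by positivity
    apply mul_left_cancel₀ hne
    linear_combination -key

theorem inv_hbarProd_eq_mul_sub (hl : 1 ≤ l) {k : ℕ} (hk : k ≠ 0) {j : ℤ} (hj : 1 ≤ j) :
    (hbarProd l (k * l + 1) j)⁻¹ =
      ((k : ℝ) * (l + 1))⁻¹ * ((hbarProd l (k * l) j)⁻¹ - (hbarProd l (k * l) (j + 1))⁻¹) := by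
  have hP := hbarProd_pos (l := l) hj (k * l)
  have hQ := hbarProd_pos (l := l) (by omega : 1 ≤ j + 1) (k * l)
  have hh : (0 : ℝ) < hbar l j := by exact_mod_cast (by have := le_hbar (l := l) hj; omega)
  have hshift : (hbar l (j + (k * l : ℕ)) : ℝ) = hbar l j + k * (l + 1) := by
    push_cast; rw [hbar_add_mul hl]; push_cast; ring
  have e := (hbarProd_succ (l := l) (k * l) j).symm.trans (hbarProd_succ' (k * l) j)
  rw [hshift] at e
  rw [hbarProd_succ']
  field_simp
  linear_combination e

theorem hasSum_inv_hbarProd (hl : 1 ≤ l) {k : ℕ} (hk : k ≠ 0) {M : ℤ} (hM : 1 ≤ M) :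
    HasSum (fun j : {j : ℤ // M ≤ j} => (hbarProd l (k * l + 1) j)⁻¹)
      (((k : ℝ) * (l + 1))⁻¹ * (hbarProd l (k * l) M)⁻¹) := by
  rw [← (natEquivIci M).hasSum_iff]
  set G : ℕ → ℝ := fun n => (hbarProd l (k * l) (M + n))⁻¹
  have hstep (n : ℕ) :
      (hbarProd l (k * l + 1) (M + n))⁻¹ = ((k : ℝ) * (l + 1))⁻¹ * (G n - G (n + 1)) := by
    simp only [G]
    push_cast
    rw [← add_assoc]
    exact inv_hbarProd_eq_mul_sub hl hk (by omega)
  have hanti : Antitone G := antitone_nat_of_succ_le fun n => by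
    have hpos := inv_pos.2 (hbarProd_pos (l := l) (by omega : 1 ≤ M + n) (k * l + 1))
    rw [hstep, mul_pos_iff_of_pos_left (by positivity)] at hpos
    linarith
  have hlim : Tendsto G atTop (𝓝 0) := by
    refine squeeze_zero (fun n => inv_nonneg.2 (hbarProd_pos (by omega) _).le) (fun n => ?_)
      tendsto_one_div_add_atTop_nhds_zero_nat
    rw [one_div]
    refine inv_anti₀ (by positivity) (le_trans ?_ (le_hbarProd (by omega) (by positivity)))
    have : (1 : ℝ) ≤ M := by exact_mod_cast hM
    push_cast
    linarith
  have h := (hasSum_sub_succ_of_antitone hanti hlim).mul_left ((k : ℝ) * (l + 1))⁻¹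
  simp only [← hstep] at h
  rw [show (hbarProd l (k * l) M)⁻¹ = G 0 - 0 by simp [G]]
  exact h

/-- `BarIndex l q r` is `SpacedTuple l q (r + 1)` by definition. -/
def SpacedTuple (l k : ℕ) (M : ℤ) : Type :=
  {v : Fin k → ℤ //
    (∀ h : 0 < k, M ≤ v ⟨0, h⟩) ∧
    ∀ (i : ℕ) (h : i + 1 < k), v ⟨i, Nat.lt_of_succ_lt h⟩ + (l : ℤ) + 1 ≤ v ⟨i + 1, h⟩}

namespace SpacedTuple

theorem le_apply {k : ℕ} {M : ℤ} (v : SpacedTuple l k M) (i : Fin k) : M ≤ v.1 i := by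
  obtain ⟨i, hi⟩ := i
  induction i with
  | zero => exact v.2.1 hi
  | succ i ih => have := v.2.2 i hi; have := ih (by omega); omega

instance (M : ℤ) : Unique (SpacedTuple l 0 M) where
  default := ⟨Fin.elim0, fun h => absurd h (by omega), fun _ h => absurd h (by omega)⟩
  uniq _ := Subtype.ext (funext fun i => i.elim0)

def consEquiv (l k : ℕ) (M : ℤ) :
    SpacedTuple l (k + 1) M ≃ Σ j : {j : ℤ // M ≤ j}, SpacedTuple l k (j + l + 1) where
  toFun v := ⟨⟨v.1 0, v.2.1 k.succ_pos⟩,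
    ⟨fun i => v.1 i.succ, fun _ => v.2.2 0 (by omega), fun i _ => v.2.2 (i + 1) (by omega)⟩⟩
  invFun p := ⟨Fin.cons p.1.1 p.2.1, fun _ => p.1.2, fun i h => by
    cases i with
    | zero => simpa [Fin.cons] using p.2.2.1 (by omega)
    | succ i => simpa [Fin.cons] using p.2.2.2 i (by omega)⟩
  left_inv v := Subtype.ext (funext fun i => Fin.cases (by simp) (by simp) i)
  right_inv := by
    rintro ⟨j, w⟩
    refine Sigma.ext (by simp) (heq_of_eq (Subtype.ext (funext fun i => by simp)))

@[simp]
theorem consEquiv_symm_apply_coe {k : ℕ} {M : ℤ}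
    (p : Σ j : {j : ℤ // M ≤ j}, SpacedTuple l k (j + l + 1)) :
    ((consEquiv l k M).symm p).1 = Fin.cons p.1.1 p.2.1 := rfl

end SpacedTuple

theorem hasSum_inv_hbarProd_mul_inv_hbarProd (hl : 1 ≤ l) (k : ℕ) {M : ℤ} (hM : 1 ≤ M) :
    HasSum (fun j : {j : ℤ // M ≤ j} =>
        (hbarProd l (k * l) (j + l + 1))⁻¹ * (hbarProd l (l + 1) j)⁻¹)
      ((((k + 1 : ℕ) : ℝ) * (l + 1))⁻¹ * (hbarProd l ((k + 1) * l) M)⁻¹) := by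
  refine (hasSum_inv_hbarProd hl k.succ_ne_zero hM).congr_fun fun j => ?_
  rw [show (k + 1) * l + 1 = (l + 1) + k * l by ring, hbarProd_add (l + 1), mul_inv, mul_comm]
  push_cast
  ring_nf

theorem hasSum_inv_prod_hbarProd (hl : 1 ≤ l) (k : ℕ) {M : ℤ} (hM : 1 ≤ M) :
    HasSum (fun v : SpacedTuple l k M => (∏ i, hbarProd l (l + 1) (v.1 i))⁻¹)
      (((k ! : ℝ) * (l + 1) ^ k)⁻¹ * (hbarProd l (k * l) M)⁻¹) := by
  induction k generalizing M with
  | zero => simp [hbarProd]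
  | succ k ih =>
    rw [← (SpacedTuple.consEquiv l k M).symm.hasSum_iff]
    suffices HasSum (fun p : Σ j : {j : ℤ // M ≤ j}, SpacedTuple l k (j + l + 1) =>
        (∏ i, hbarProd l (l + 1) (p.2.1 i))⁻¹ * (hbarProd l (l + 1) p.1)⁻¹)
        (((k + 1)! * (l + 1 : ℝ) ^ (k + 1))⁻¹ * (hbarProd l ((k + 1) * l) M)⁻¹) by
      simpa [Function.comp_def, Fin.prod_univ_succ, mul_inv] using this
    have hinner (j : {j : ℤ // M ≤ j}) :
        HasSum (fun w : SpacedTuple l k (j + l + 1) =>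
          (∏ i, hbarProd l (l + 1) (w.1 i))⁻¹ * (hbarProd l (l + 1) j)⁻¹)
          (((k ! : ℝ) * (l + 1) ^ k)⁻¹ * (hbarProd l (k * l) (j + l + 1))⁻¹ *
            (hbarProd l (l + 1) j)⁻¹) :=
      (ih (by have := j.2; omega)).mul_right _
    have houter := (hasSum_inv_hbarProd_mul_inv_hbarProd hl k hM).mul_left
      ((k ! : ℝ) * (l + 1) ^ k)⁻¹
    have hfac : (((k + 1)! : ℕ) : ℝ) * (l + 1) ^ (k + 1) =
        (k ! * (l + 1) ^ k) * ((k + 1 : ℕ) * (l + 1)) := by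
      push_cast [Nat.factorial_succ, pow_succ]
      ring
    rw [← mul_assoc, ← mul_inv, ← hfac] at houter
    refine hasSum_sigma_of_nonneg (fun p => ?_) hinner (houter.congr_fun fun j => mul_assoc _ _ _)
    refine mul_nonneg (inv_nonneg.2 (prod_nonneg fun i _ => (hbarProd_pos ?_ _).le))
      (inv_nonneg.2 (hbarProd_pos (hM.trans p.1.2) _).le)
    have := p.1.2
    have := p.2.le_apply i
    omega

theorem prod_Icc_hbar_eq_hbarProd (r : ℕ) :
    ∏ i ∈ Icc 1 r, (hbar l (i : ℤ) : ℝ) = hbarProd l r 1 := by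
  rw [← Ico_add_one_right_eq_Icc, prod_Ico_eq_prod_range, Nat.add_sub_cancel]
  simp [hbarProd, add_comm]

end BarHookLengths

theorem bar_case_hook_sum_general (n l q r : ℕ) (hl : 1 ≤ l) (hr : r ≤ l)
    (hdecomp : n = q * (l + 1) + r) :
    Summable (barTerm l q r) ∧
    (n.factorial : ℝ) * (∏ i ∈ Finset.Icc 1 r, ((hbar l (i : ℤ)) : ℝ))⁻¹ *
      (∑' v : BarIndex l q r, barTerm l q r v) = 1 := by
  have hsum : HasSum (barTerm l q r)
      (((q ! : ℝ) * (l + 1) ^ q)⁻¹ * (hbarProd l (q * l) (r + 1))⁻¹) :=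
    hasSum_inv_prod_hbarProd hl q (by omega)
  refine ⟨hsum.summable, ?_⟩
  have hP := hbarProd_pos (l := l) le_rfl r
  have hQ := hbarProd_pos (l := l) (by omega : 1 ≤ (r : ℤ) + 1) (q * l)
  rw [hsum.tsum_eq, hdecomp, factorial_eq_hbarProd_mul hl hr, prod_Icc_hbar_eq_hbarProd,
    add_comm (q * l), hbarProd_add, add_comm (1 : ℤ)]
  field_simp

/-- The bar-case hook sum identity:
`n! · (∏_{i=1}^r h_i)⁻¹ · Σ_{(i_1,…,i_q) ∈ E_{ℓ;n}} ∏_v ∏_u 1/h_{i_v+u} = 1`. -/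
theorem bar_case_hook_sum (n l q r : ℕ) (hn : 1 ≤ n) (hl : 1 ≤ l) (hr : r ≤ l)
    (hdecomp : n = q * (l + 1) + r) :
    Summable (barTerm l q r) ∧
    (n.factorial : ℝ) * (∏ i ∈ Finset.Icc 1 r, ((hbar l (i : ℤ)) : ℝ))⁻¹ *
      (∑' v : BarIndex l q r, barTerm l q r v) = 1 :=
  bar_case_hook_sum_general n l q r hl hr hdecomp
end

section
/- Let n,ℓ ≥ 1, let λ = (n) and μ = (0) in P_{1,ℓ} (so m = 1, ω = (1,−ℓ)), and write n = q(ℓ+1)+r with q ≥ 0 and 0 ≤ r ≤ ℓ. Denote the cells of λ̂ by x_i := π(1, n−i+1) for i ≥ 1 (these are pairwise distinct and exhaust λ̂); for i ≤ j set [x_i,x_j] = {x_i, x_{i+1}, …, x_j}, and [x_i,x_j] = ∅ for i > j. Then the map ψ(i_1,…,i_q) = λ̂ ∖ ([x_1,x_r] ∪ ⋃_{k=1}^q [x_{i_k}, x_{i_k+ℓ}]) is a bijection from E_{ℓ;n} onto the set E_{λ̂}(μ̂) of cylindric excited diagrams. -/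
open scoped BigOperators

/-- The index set `E_{ℓ;n}` of the bar case, as a set of tuples. -/
def BarIndexSet (l q r : ℕ) : Set (Fin q → ℤ) :=
  {v | (∀ h : 0 < q, (r : ℤ) + 1 ≤ v ⟨0, h⟩) ∧
    ∀ (i : ℕ) (h : i + 1 < q),
      v ⟨i, Nat.lt_of_succ_lt h⟩ + (l : ℤ) + 1 ≤ v ⟨i + 1, h⟩}

/-- The cell `x_i = π(1, n−i+1)` of the bar cylindric diagram. -/
def barCell (n l : ℕ) (i : ℤ) : Cyl ((1 : ℤ), -(l : ℤ)) :=
  pr ((1 : ℤ), -(l : ℤ)) ((1 : ℤ), (n : ℤ) - i + 1)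

/-- The interval `[x_i, x_j] = {x_i, …, x_j}` (empty if `i > j`). -/
def barSeg (n l : ℕ) (i j : ℤ) : Set (Cyl ((1 : ℤ), -(l : ℤ))) :=
  barCell n l '' Set.Icc i j

/-- The map `ψ(i_1,…,i_q) = λ̂ ∖ ([x_1,x_r] ∪ ⋃_k [x_{i_k}, x_{i_k+ℓ}])`. -/
def barPsi (n l q r : ℕ) (v : Fin q → ℤ) : Set (Cyl ((1 : ℤ), -(l : ℤ))) :=
  cylDiag 1 l (fun _ => (n : ℤ)) \
    (barSeg n l 1 (r : ℤ) ∪ ⋃ k : Fin q, barSeg n l (v k) (v k + (l : ℤ)))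

namespace BarAux


variable {l q r : ℕ}

def base (l r : ℕ) (k : ℕ) : ℤ := (r : ℤ) + 1 + (k : ℤ) * ((l : ℤ) + 1)

def U (l r : ℕ) {q : ℕ} (v : Fin q → ℤ) : Set ℤ :=
  Set.Icc 1 (r : ℤ) ∪ ⋃ k : Fin q, Set.Icc (v k) (v k + (l : ℤ))

def M (l r : ℕ) {q : ℕ} (v : Fin q → ℤ) : Set ℤ := Set.Ici 1 \ U l r v

def mstep (l : ℕ) (S S' : Set ℤ) : Prop :=
  ∃ i : ℤ, i ∈ S ∧ (l : ℤ) + 2 ≤ i ∧ i - 1 ∉ S ∧ i - (l : ℤ) ∉ S ∧ i - ((l : ℤ) + 1) ∉ S ∧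
    S' = (S \ {i}) ∪ {i - ((l : ℤ) + 1)}

lemma base_succ (k : ℕ) : base l r (k + 1) = base l r k + ((l : ℤ) + 1) := by
  simp only [base]; push_cast; ring

lemma le_base (k : ℕ) : (r : ℤ) + 1 ≤ base l r k := by
  have : (0:ℤ) ≤ (k : ℤ) * ((l : ℤ) + 1) := by positivity
  simp only [base]; linarith

lemma mem_U {v : Fin q → ℤ} {m : ℤ} :
    m ∈ U l r v ↔ (1 ≤ m ∧ m ≤ (r : ℤ)) ∨ ∃ k : Fin q, v k ≤ m ∧ m ≤ v k + (l : ℤ) := by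
  simp [U, Set.mem_Icc]

lemma mem_M {v : Fin q → ℤ} {m : ℤ} :
    m ∈ M l r v ↔ 1 ≤ m ∧ m ∉ U l r v := by
  simp [M, Set.mem_diff]

lemma E_gap {v : Fin q → ℤ} (hv : v ∈ BarIndexSet l q r) {j k : Fin q} (h : j < k) :
    v j + (l : ℤ) + 1 ≤ v k := by
  obtain ⟨-, h2⟩ := hv
  have key : ∀ d : ℕ, ∀ (j : ℕ) (hj : j + d + 1 < q),
      v ⟨j, by omega⟩ + (l : ℤ) + 1 ≤ v ⟨j + d + 1, hj⟩ := by
    intro d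
    induction d with
    | zero => intro j hj; exact h2 j hj
    | succ d ih =>
      intro j hj
      have e : (⟨j + (d + 1) + 1, hj⟩ : Fin q) = ⟨j + d + 1 + 1, by omega⟩ := rfl
      rw [e]
      have h1 := ih j (by omega)
      have h2' := h2 (j + d + 1) (by omega)
      have hl0 : (0:ℤ) ≤ (l : ℤ) := Int.natCast_nonneg l
      linarith
  have hjk : (j : ℕ) < (k : ℕ) := h
  have e2 : k = ⟨(j : ℕ) + ((k : ℕ) - (j : ℕ) - 1) + 1, by omega⟩ := by
    simp [Fin.ext_iff]; omega
  rw [e2]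
  exact key ((k : ℕ) - (j : ℕ) - 1) (j : ℕ) (by omega)

lemma E_mono {v : Fin q → ℤ} (hv : v ∈ BarIndexSet l q r) {j k : Fin q} (h : j ≤ k) :
    v j ≤ v k := by
  rcases eq_or_lt_of_le h with h' | h'
  · rw [h']
  · have hl0 : (0:ℤ) ≤ (l : ℤ) := Int.natCast_nonneg l
    linarith [E_gap hv h']

lemma E_base_le {v : Fin q → ℤ} (hv : v ∈ BarIndexSet l q r) (k : Fin q) :
    base l r (k : ℕ) ≤ v k := by
  obtain ⟨h1, h2⟩ := hv
  have key : ∀ (m : ℕ) (hm : m < q), base l r m ≤ v ⟨m, hm⟩ := by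
    intro m
    induction m with
    | zero =>
      intro hm
      have := h1 (by omega)
      have e : (⟨0, by omega⟩ : Fin q) = ⟨0, hm⟩ := rfl
      rw [e] at this
      simpa [base] using this
    | succ m ih =>
      intro hm
      have hb := ih (by omega)
      have hs := h2 m hm
      rw [base_succ]
      linarith
  have e : k = ⟨(k : ℕ), k.isLt⟩ := rfl
  rw [e]
  exact key _ _

lemma E_lb {v : Fin q → ℤ} (hv : v ∈ BarIndexSet l q r) (k : Fin q) : (r : ℤ) + 1 ≤ v k :=
  le_trans (le_base _) (E_base_le hv k)

namespace Core

lemma compl_swap {A : Set ℤ} {a b : ℤ} (ha : a ∈ A) (ha1 : 1 ≤ a) (hb : b ∉ A) :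
    Set.Ici 1 \ ((A \ {a}) ∪ {b}) = ((Set.Ici 1 \ A) \ {b}) ∪ {a} := by
  ext m
  simp only [Set.mem_diff, Set.mem_union, Set.mem_singleton_iff, Set.mem_Ici]
  constructor
  · rintro ⟨h1, h2⟩
    by_cases hma : m = a
    · right; exact hma
    · left; exact ⟨⟨h1, fun hmA => h2 (Or.inl ⟨hmA, hma⟩)⟩, fun hmb => h2 (Or.inr hmb)⟩
  · rintro (⟨⟨h1, h2⟩, h3⟩ | rfl)
    · exact ⟨h1, by rintro (⟨hA, -⟩ | hb'); exacts [h2 hA, h3 hb']⟩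
    · exact ⟨ha1, by rintro (⟨-, hne⟩ | hab); exacts [hne rfl, hb (hab ▸ ha)]⟩

end Core

variable {v : Fin q → ℤ}

lemma gapgt (hv : v ∈ BarIndexSet l q r) (k : Fin q)
    (hgap : ∀ h : (k : ℕ) + 1 < q, v k + (l : ℤ) + 2 ≤ v ⟨(k : ℕ) + 1, h⟩)
    {j : Fin q} (hj : k < j) : v k + (l : ℤ) + 2 ≤ v j := by
  have hjk : (k : ℕ) < (j : ℕ) := hj
  have hq : (k : ℕ) + 1 < q := by omega
  have h1 := hgap hq
  have h2 : v ⟨(k : ℕ) + 1, hq⟩ ≤ v j := E_mono hv (by simp [Fin.le_def]; omega)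
  linarith

lemma notMem_U_top (hl : 1 ≤ l) (hv : v ∈ BarIndexSet l q r) (k : Fin q)
    (hgap : ∀ h : (k : ℕ) + 1 < q, v k + (l : ℤ) + 2 ≤ v ⟨(k : ℕ) + 1, h⟩) :
    v k + (l : ℤ) + 1 ∉ U l r v := by
  rw [mem_U]
  rintro (⟨h1, h2⟩ | ⟨j, hj1, hj2⟩)
  · have := E_lb hv k
    have : (0:ℤ) ≤ (l : ℤ) := Int.natCast_nonneg l
    linarith [E_lb hv k]
  · rcases lt_trichotomy j k with hjk | rfl | hjk
    · linarith [E_gap hv hjk]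
    · linarith
    · linarith [gapgt hv k hgap hjk]

lemma U_update (hl : 1 ≤ l) (hv : v ∈ BarIndexSet l q r) (k : Fin q)
    (hgap : ∀ h : (k : ℕ) + 1 < q, v k + (l : ℤ) + 2 ≤ v ⟨(k : ℕ) + 1, h⟩) :
    U l r (Function.update v k (v k + 1)) = (U l r v \ {v k}) ∪ {v k + (l : ℤ) + 1} := by
  have hl0 : (1:ℤ) ≤ (l : ℤ) := by exact_mod_cast hl
  have hlb := E_lb hv k
  ext m
  simp only [Set.mem_union, Set.mem_diff, Set.mem_singleton_iff, mem_U]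
  constructor
  · rintro (hIcc | ⟨j, hj1, hj2⟩)
    · exact Or.inl ⟨Or.inl hIcc, fun hm => by rw [hm] at hIcc; linarith [hIcc.2]⟩
    · rw [Function.update_apply] at hj1 hj2
      by_cases hjk : j = k
      · rw [if_pos hjk] at hj1 hj2
        by_cases hm : m = v k + (l : ℤ) + 1
        · exact Or.inr hm
        · exact Or.inl ⟨Or.inr ⟨k, by linarith, by
            rcases lt_or_ge m (v k + (l:ℤ) + 1) with h | h
            · linarith
            · exact absurd (le_antisymm (by linarith) h) hm⟩, fun hm' => by linarith [hm' ▸ hj1]⟩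
      · rw [if_neg hjk] at hj1 hj2
        refine Or.inl ⟨Or.inr ⟨j, hj1, hj2⟩, fun hm => ?_⟩
        rcases lt_trichotomy j k with h | h | h
        · have := E_gap hv h; rw [hm] at hj2; linarith
        · exact hjk h
        · have := gapgt hv k hgap h; rw [hm] at hj1; linarith
  · rintro (⟨hU, hne⟩ | rfl)
    · rcases hU with hIcc | ⟨j, hj1, hj2⟩
      · exact Or.inl hIcc
      · by_cases hjk : j = k
        · subst hjk
          refine Or.inr ⟨j, ?_, ?_⟩ <;> rw [Function.update_apply, if_pos rfl]
          · rcases lt_or_ge (v j) m with h | h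
            · linarith
            · exact absurd (le_antisymm h hj1) hne
          · linarith
        · exact Or.inr ⟨j, by rw [Function.update_apply, if_neg hjk]; exact hj1,
            by rw [Function.update_apply, if_neg hjk]; exact hj2⟩
    · exact Or.inr ⟨k, by rw [Function.update_apply, if_pos rfl]; constructor <;> linarith⟩

lemma mem_U_self (k : Fin q) : v k ∈ U l r v := by
  have : (0:ℤ) ≤ (l : ℤ) := Int.natCast_nonneg l
  exact mem_U.mpr (Or.inr ⟨k, le_refl _, by linarith⟩)

lemma core (hl : 1 ≤ l) (hv : v ∈ BarIndexSet l q r) (k : Fin q)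
    (hgap : ∀ h : (k : ℕ) + 1 < q, v k + (l : ℤ) + 2 ≤ v ⟨(k : ℕ) + 1, h⟩) :
    Function.update v k (v k + 1) ∈ BarIndexSet l q r ∧
    M l r (Function.update v k (v k + 1)) = (M l r v \ {v k + (l : ℤ) + 1}) ∪ {v k} ∧
    mstep l (M l r v) (M l r (Function.update v k (v k + 1))) := by
  have hl0 : (1:ℤ) ≤ (l : ℤ) := by exact_mod_cast hl
  have hr0 : (0:ℤ) ≤ (r : ℤ) := Int.natCast_nonneg r
  have hlb := E_lb hv k
  have hbnot := notMem_U_top hl hv k hgap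
  have hmemE : Function.update v k (v k + 1) ∈ BarIndexSet l q r := by
    obtain ⟨h1, h2⟩ := hv
    constructor
    · intro h0
      rw [Function.update_apply]
      by_cases hc : (⟨0, h0⟩ : Fin q) = k
      · rw [if_pos hc]; linarith
      · rw [if_neg hc]; exact h1 h0
    · intro i hi
      rw [Function.update_apply, Function.update_apply]
      by_cases hc1 : (⟨i, Nat.lt_of_succ_lt hi⟩ : Fin q) = k <;>
        by_cases hc2 : (⟨i + 1, hi⟩ : Fin q) = k
      · exfalso
        have e1 : i = (k : ℕ) := congrArg Fin.val hc1
        have e2 : i + 1 = (k : ℕ) := congrArg Fin.val hc2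
        omega
      · rw [if_pos hc1, if_neg hc2]
        have hkv : (k : ℕ) = i := (congrArg Fin.val hc1).symm
        have hq : (k : ℕ) + 1 < q := by omega
        have e : (⟨i + 1, hi⟩ : Fin q) = ⟨(k : ℕ) + 1, hq⟩ := by simp [Fin.ext_iff]; omega
        rw [e]
        linarith [hgap hq]
      · rw [if_neg hc1, if_pos hc2]
        have := h2 i hi
        rw [hc2] at this
        linarith
      · rw [if_neg hc1, if_neg hc2]; exact h2 i hi
  have hMid : M l r (Function.update v k (v k + 1)) =
      (M l r v \ {v k + (l : ℤ) + 1}) ∪ {v k} := by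
    show Set.Ici 1 \ _ = _
    rw [U_update hl hv k hgap]
    exact Core.compl_swap (mem_U_self k) (by linarith) hbnot
  refine ⟨hmemE, hMid, v k + (l : ℤ) + 1, ?_, by linarith, ?_, ?_, ?_, ?_⟩
  · exact mem_M.mpr ⟨by linarith, hbnot⟩
  · intro h
    exact (mem_M.mp h).2 (mem_U.mpr (Or.inr ⟨k, by linarith, by linarith⟩))
  · intro h
    exact (mem_M.mp h).2 (mem_U.mpr (Or.inr ⟨k, by linarith, by linarith⟩))
  · intro h
    exact (mem_M.mp h).2 (mem_U.mpr (Or.inr ⟨k, by linarith, by linarith⟩))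
  · rw [hMid]
    have e : v k + (l : ℤ) + 1 - ((l : ℤ) + 1) = v k := by ring
    rw [e]

def vstar (l r q : ℕ) : Fin q → ℤ := fun k => base l r (k : ℕ)

lemma vstar_mem : vstar l r q ∈ BarIndexSet l q r := by
  constructor
  · intro h0; simp [vstar, base]
  · intro i hi
    show base l r i + _ + 1 ≤ base l r (i + 1)
    rw [base_succ]; linarith

def msum (l r : ℕ) {q : ℕ} (v : Fin q → ℤ) : ℕ := ∑ k, (v k - base l r (k : ℕ)).toNat

lemma reach_of_E (hl : 1 ≤ l) :
    ∀ N : ℕ, ∀ v : Fin q → ℤ, v ∈ BarIndexSet l q r → msum l r v = N →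
    Relation.ReflTransGen (mstep l) (M l r (vstar l r q)) (M l r v) := by
  intro N
  induction N using Nat.strong_induction_on with
  | _ N ih =>
    intro v hv hN
    by_cases h0 : msum l r v = 0
    · have hveq : v = vstar l r q := by
        funext k
        have hk := E_base_le hv k
        have hz : (v k - base l r (k : ℕ)).toNat = 0 :=
          Finset.sum_eq_zero_iff.mp h0 k (Finset.mem_univ k)
        show v k = base l r (k : ℕ)
        omega
      rw [hveq]
    · have hne : (Finset.univ.filter (fun k : Fin q => base l r (k : ℕ) < v k)).Nonempty := by
        by_contra hcon
        apply h0
        rw [Finset.not_nonempty_iff_eq_empty, Finset.filter_eq_empty_iff] at hcon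
        apply Finset.sum_eq_zero
        intro k _
        have h1 := E_base_le hv k
        have h2 := hcon (Finset.mem_univ k)
        omega
      set k₀ := (Finset.univ.filter (fun k : Fin q => base l r (k : ℕ) < v k)).min' hne with hk₀def
      have hk₀mem : base l r (k₀ : ℕ) < v k₀ := by
        have := Finset.min'_mem _ hne
        rw [Finset.mem_filter] at this
        exact this.2
      have hmin : ∀ j : Fin q, j < k₀ → v j = base l r (j : ℕ) := by
        intro j hj
        by_contra hcon
        have hlt : base l r (j : ℕ) < v j := lt_of_le_of_ne (E_base_le hv j) (Ne.symm hcon)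
        have hle := Finset.min'_le (Finset.univ.filter fun k : Fin q => base l r (k : ℕ) < v k) j
          (by rw [Finset.mem_filter]; exact ⟨Finset.mem_univ j, hlt⟩)
        rw [← hk₀def] at hle
        exact absurd hj (not_lt.mpr hle)
      set v' := Function.update v k₀ (v k₀ - 1) with hv'def
      have hv'k : v' k₀ = v k₀ - 1 := by rw [hv'def, Function.update_self]
      have hv'ne : ∀ j : Fin q, j ≠ k₀ → v' j = v j := by
        intro j hj; rw [hv'def, Function.update_apply, if_neg hj]
      have hv'E : v' ∈ BarIndexSet l q r := by
        obtain ⟨h1, h2⟩ := hv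
        constructor
        · intro hq0
          by_cases hc : (⟨0, hq0⟩ : Fin q) = k₀
          · rw [hc, hv'k]
            have := le_base (l := l) (r := r) (k₀ : ℕ)
            omega
          · rw [hv'ne _ hc]; exact h1 hq0
        · intro i hi
          by_cases hc1 : (⟨i, Nat.lt_of_succ_lt hi⟩ : Fin q) = k₀ <;>
            by_cases hc2 : (⟨i + 1, hi⟩ : Fin q) = k₀
          · exfalso
            have e1 : i = (k₀ : ℕ) := congrArg Fin.val hc1
            have e2 : i + 1 = (k₀ : ℕ) := congrArg Fin.val hc2
            omega
          · rw [hv'ne _ hc2, hc1, hv'k]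
            have hlt : (⟨i, Nat.lt_of_succ_lt hi⟩ : Fin q) < ⟨i + 1, hi⟩ := by
              simp [Fin.lt_def]
            have hg := E_gap ⟨h1, h2⟩ hlt
            rw [hc1] at hg
            linarith
          · rw [hv'ne _ hc1, hc2, hv'k]
            have e2 : (k₀ : ℕ) = i + 1 := (congrArg Fin.val hc2).symm
            have hjlt : (⟨i, Nat.lt_of_succ_lt hi⟩ : Fin q) < k₀ := by
              simp only [Fin.lt_def, Fin.val_mk]; omega
            have hmj := hmin _ hjlt
            rw [hmj]
            have hb : base l r (k₀ : ℕ) = base l r i + ((l : ℤ) + 1) := by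
              rw [e2]; exact base_succ i
            linarith
          · rw [hv'ne _ hc1, hv'ne _ hc2]; exact h2 i hi
      have hupd : Function.update v' k₀ (v' k₀ + 1) = v := by
        funext j
        by_cases hj : j = k₀
        · subst hj; rw [Function.update_self, hv'k]; ring
        · rw [Function.update_apply, if_neg hj, hv'ne _ hj]
      have hgap' : ∀ h : (k₀ : ℕ) + 1 < q, v' k₀ + (l : ℤ) + 2 ≤ v' ⟨(k₀ : ℕ) + 1, h⟩ := by
        intro h
        have hne2 : (⟨(k₀ : ℕ) + 1, h⟩ : Fin q) ≠ k₀ := by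
          simp [Fin.ext_iff]
        have hlt : k₀ < (⟨(k₀ : ℕ) + 1, h⟩ : Fin q) := by simp [Fin.lt_def]
        have := E_gap hv hlt
        rw [hv'ne _ hne2, hv'k]
        linarith
      obtain ⟨hE', hid, hstep⟩ := core hl hv'E k₀ hgap'
      rw [hupd] at hstep
      have hlt : msum l r v' < N := by
        rw [← hN]
        apply Finset.sum_lt_sum
        · intro j _
          by_cases hj : j = k₀
          · subst hj; rw [hv'k]; have := E_base_le hv k₀; omega
          · rw [hv'ne _ hj]
        · exact ⟨k₀, Finset.mem_univ _, by rw [hv'k]; omega⟩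
      exact (ih _ hlt v' hv'E rfl).tail hstep

lemma E_of_reach (hl : 1 ≤ l) (hr : r ≤ l) {S : Set ℤ}
    (h : Relation.ReflTransGen (mstep l) (M l r (vstar l r q)) S) :
    ∃ v ∈ BarIndexSet l q r, S = M l r v := by
  induction h with
  | refl => exact ⟨vstar l r q, vstar_mem, rfl⟩
  | tail hb hstep ih =>
    obtain ⟨v, hv, rfl⟩ := ih
    obtain ⟨i, hiS, hil, h1, h2, h3, rfl⟩ := hstep
    have hl0 : (1 : ℤ) ≤ (l : ℤ) := by exact_mod_cast hl
    rw [mem_M] at hiS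
    obtain ⟨hi1, hiU⟩ := hiS
    have h1' : i - 1 ∈ U l r v := by
      by_contra hcon
      exact h1 (mem_M.mpr ⟨by linarith, hcon⟩)
    obtain ⟨k, hk1, hk2⟩ : ∃ k : Fin q, v k ≤ i - 1 ∧ i - 1 ≤ v k + (l : ℤ) := by
      rcases mem_U.mp h1' with ⟨ha, hb'⟩ | hk
      · exfalso
        have : (r : ℤ) ≤ (l : ℤ) := by exact_mod_cast hr
        linarith
      · exact hk
    have hik : i = v k + (l : ℤ) + 1 := by
      rcases eq_or_lt_of_le hk2 with h' | h'
      · linarith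
      · exact absurd (mem_U.mpr (Or.inr ⟨k, by linarith, by linarith⟩)) hiU
    have hgap : ∀ h : (k : ℕ) + 1 < q, v k + (l : ℤ) + 2 ≤ v ⟨(k : ℕ) + 1, h⟩ := by
      intro hq
      have hknext : k < (⟨(k : ℕ) + 1, hq⟩ : Fin q) := by simp [Fin.lt_def]
      have hg := E_gap hv hknext
      rcases eq_or_lt_of_le hg with h' | h'
      · exfalso
        apply hiU
        exact mem_U.mpr (Or.inr ⟨⟨(k : ℕ) + 1, hq⟩, by linarith, by linarith⟩)
      · linarith
    obtain ⟨hE', hid, -⟩ := core hl hv k hgap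
    refine ⟨Function.update v k (v k + 1), hE', ?_⟩
    rw [hid, hik]
    have e : v k + (l : ℤ) + 1 - ((l : ℤ) + 1) = v k := by ring
    rw [e]

lemma U_inj_aux {v w : Fin q → ℤ} (hv : v ∈ BarIndexSet l q r) (hw : w ∈ BarIndexSet l q r)
    (hUsub : U l r w ⊆ U l r v) (m : ℕ) (hm : m < q)
    (hagree : ∀ j : Fin q, (j : ℕ) < m → v j = w j) : v ⟨m, hm⟩ ≤ w ⟨m, hm⟩ := by
  have hl0 : (0 : ℤ) ≤ (l : ℤ) := Int.natCast_nonneg l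
  have hmem : w ⟨m, hm⟩ ∈ U l r v := hUsub (mem_U_self ⟨m, hm⟩)
  rcases mem_U.mp hmem with ⟨ha, hb'⟩ | ⟨j, hj1, hj2⟩
  · exact absurd hb' (by have := E_lb hw ⟨m, hm⟩; linarith)
  · rcases lt_or_ge (j : ℕ) m with hjm | hjm
    · exfalso
      have hjlt : j < (⟨m, hm⟩ : Fin q) := by simp only [Fin.lt_def, Fin.val_mk]; omega
      have hg := E_gap hw hjlt
      rw [← hagree j hjm] at hg
      linarith
    · have hle : (⟨m, hm⟩ : Fin q) ≤ j := by simp only [Fin.le_def, Fin.val_mk]; omega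
      exact le_trans (E_mono hv hle) hj1

lemma U_inj {v w : Fin q → ℤ} (hv : v ∈ BarIndexSet l q r) (hw : w ∈ BarIndexSet l q r)
    (hU : U l r v = U l r w) : v = w := by
  have key : ∀ m : ℕ, ∀ hm : m < q, v ⟨m, hm⟩ = w ⟨m, hm⟩ := by
    intro m
    induction m using Nat.strong_induction_on with
    | _ m ih =>
      intro hm
      have hagree : ∀ j : Fin q, (j : ℕ) < m → v j = w j := by
        intro j hj
        have e : j = ⟨(j : ℕ), j.isLt⟩ := rfl
        rw [e]
        exact ih (j : ℕ) hj j.isLt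
      have h1 := U_inj_aux hv hw (le_of_eq hU.symm) m hm hagree
      have h2 := U_inj_aux hw hv (le_of_eq hU) m hm (fun j hj => (hagree j hj).symm)
      linarith
  funext k
  have e : k = ⟨(k : ℕ), k.isLt⟩ := rfl
  rw [e]
  exact key (k : ℕ) k.isLt

lemma U_subset_Ici {v : Fin q → ℤ} (hv : v ∈ BarIndexSet l q r) :
    U l r v ⊆ Set.Ici 1 := by
  intro m hm
  have hr0 : (0 : ℤ) ≤ (r : ℤ) := Int.natCast_nonneg r
  rcases mem_U.mp hm with ⟨h1, -⟩ | ⟨k, hk1, -⟩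
  · exact h1
  · have := E_lb hv k
    simp only [Set.mem_Ici]
    linarith

lemma U_eq_of_M_eq {v w : Fin q → ℤ} (hv : v ∈ BarIndexSet l q r)
    (hw : w ∈ BarIndexSet l q r) (hM : M l r v = M l r w) : U l r v = U l r w := by
  have h1 : U l r v = Set.Ici 1 \ M l r v :=
    (Set.diff_diff_cancel_left (U_subset_Ici hv)).symm
  have h2 : U l r w = Set.Ici 1 \ M l r w :=
    (Set.diff_diff_cancel_left (U_subset_Ici hw)).symm
  rw [h1, h2, hM]

lemma U_vstar (hl : 1 ≤ l) {n : ℕ} (hdecomp : n = q * (l + 1) + r) {m : ℤ} :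
    m ∈ U l r (vstar l r q) ↔ 1 ≤ m ∧ m ≤ (n : ℤ) := by
  have hn : (n : ℤ) = (q : ℤ) * ((l : ℤ) + 1) + (r : ℤ) := by exact_mod_cast hdecomp
  have hl0 : (1 : ℤ) ≤ (l : ℤ) := by exact_mod_cast hl
  have hr0 : (0 : ℤ) ≤ (r : ℤ) := Int.natCast_nonneg r
  rw [mem_U]
  constructor
  · rintro (⟨h1, h2⟩ | ⟨k, hk1, hk2⟩)
    · have hq0 : (0 : ℤ) ≤ (q : ℤ) * ((l : ℤ) + 1) := by positivity
      exact ⟨h1, by linarith⟩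
    · have hb : vstar l r q k = (r : ℤ) + 1 + ((k : ℕ) : ℤ) * ((l : ℤ) + 1) := rfl
      have hkq : ((k : ℕ) : ℤ) ≤ (q : ℤ) - 1 := by
        have := k.isLt
        have : ((k : ℕ) : ℤ) < (q : ℤ) := by exact_mod_cast k.isLt
        linarith
      have hmul : ((k : ℕ) : ℤ) * ((l : ℤ) + 1) ≤ ((q : ℤ) - 1) * ((l : ℤ) + 1) :=
        mul_le_mul_of_nonneg_right hkq (by positivity)
      have hexp : ((q : ℤ) - 1) * ((l : ℤ) + 1) = (q : ℤ) * ((l : ℤ) + 1) - ((l : ℤ) + 1) := by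
        ring
      have hk0 : (0 : ℤ) ≤ ((k : ℕ) : ℤ) * ((l : ℤ) + 1) := by positivity
      rw [hb] at hk1 hk2
      exact ⟨by linarith, by linarith⟩
  · rintro ⟨h1, h2⟩
    by_cases hmr : m ≤ (r : ℤ)
    · exact Or.inl ⟨h1, hmr⟩
    · right
      push_neg at hmr
      have hq1 : 1 ≤ q := by
        rcases Nat.eq_zero_or_pos q with hq | hq
        · exfalso; subst hq; simp at hdecomp; subst hdecomp; omega
        · exact hq
      set t : ℕ := (m - (r : ℤ) - 1).toNat with ht
      have htm : (t : ℤ) = m - (r : ℤ) - 1 := Int.toNat_of_nonneg (by omega)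
      set kk : ℕ := t / (l + 1) with hkk
      have hkq : kk < q := by
        have h1' : t < q * (l + 1) := by
          have h2' : (t : ℤ) < ((q * (l + 1) : ℕ) : ℤ) := by
            push_cast
            rw [htm]
            linarith
          exact_mod_cast h2'
        exact (Nat.div_lt_iff_lt_mul (by omega)).mpr h1'
      refine ⟨⟨kk, hkq⟩, ?_, ?_⟩ <;>
      · have hdm := Nat.div_add_mod t (l + 1)
        have hmod : t % (l + 1) < l + 1 := Nat.mod_lt _ (by omega)
        have hb : vstar l r q ⟨kk, hkq⟩ = (r : ℤ) + 1 + (kk : ℤ) * ((l : ℤ) + 1) := rfl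
        have hcast : ((l : ℤ) + 1) * (kk : ℤ) + ((t % (l + 1) : ℕ) : ℤ) = (t : ℤ) := by
          exact_mod_cast hdm
        have hmodz : ((t % (l + 1) : ℕ) : ℤ) ≤ (l : ℤ) := by exact_mod_cast (by omega : t % (l+1) ≤ l)
        have hmodz0 : (0 : ℤ) ≤ ((t % (l + 1) : ℕ) : ℤ) := Int.natCast_nonneg _
        have hcomm : ((l : ℤ) + 1) * (kk : ℤ) = (kk : ℤ) * ((l : ℤ) + 1) := by ring
        rw [hb]
        linarith
  
lemma M_vstar (hl : 1 ≤ l) {n : ℕ} (hdecomp : n = q * (l + 1) + r) :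
    M l r (vstar l r q) = Set.Ici ((n : ℤ) + 1) := by
  ext m
  rw [mem_M, Set.mem_Ici]
  constructor
  · rintro ⟨h1, hU⟩
    by_contra hcon
    exact hU ((U_vstar hl hdecomp).mpr ⟨h1, by omega⟩)
  · intro h
    have hn0 : (0 : ℤ) ≤ (n : ℤ) := Int.natCast_nonneg n
    exact ⟨by omega, fun hU => by have := (U_vstar hl hdecomp).mp hU; omega⟩



variable {n l : ℕ}

/-- the column index of a cell: `i` such that the cell is `x_i`. -/
def colIdx (n l : ℕ) (p : Cell) : ℤ := (n : ℤ) + 1 - (p.2 + (p.1 - 1) * (l : ℤ))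

lemma smul_omega (k : ℤ) : k • ((1 : ℤ), -(l : ℤ)) = (k, -(k * (l : ℤ))) := by
  simp [Prod.smul_def, smul_eq_mul]

lemma pr_eq_iff {u w : Cell} :
    pr ((1 : ℤ), -(l : ℤ)) u = pr ((1 : ℤ), -(l : ℤ)) w ↔
      ∃ k : ℤ, w = u + k • ((1 : ℤ), -(l : ℤ)) := by
  unfold pr
  rw [QuotientAddGroup.eq]
  simp only [AddSubgroup.mem_zmultiples_iff]
  constructor
  · rintro ⟨k, hk⟩; refine ⟨k, ?_⟩; rw [hk]; abel
  · rintro ⟨k, rfl⟩; refine ⟨k, ?_⟩; abel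

lemma colIdx_add_smul (p : Cell) (k : ℤ) :
    colIdx n l (p + k • ((1 : ℤ), -(l : ℤ))) = colIdx n l p := by
  rw [smul_omega]
  show (n : ℤ) + 1 - ((p.2 + -(k * l)) + (p.1 + k - 1) * l) = _
  unfold colIdx
  ring

lemma pr_eq_iff_colIdx {u w : Cell} :
    pr ((1 : ℤ), -(l : ℤ)) u = pr ((1 : ℤ), -(l : ℤ)) w ↔ colIdx n l u = colIdx n l w := by
  rw [pr_eq_iff]
  constructor
  · rintro ⟨k, rfl⟩; exact (colIdx_add_smul u k).symm
  · intro h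
    refine ⟨w.1 - u.1, ?_⟩
    rw [smul_omega]
    unfold colIdx at h
    have h2 : w.2 = u.2 + -( (w.1 - u.1) * (l : ℤ)) := by linear_combination h
    have : w = (w.1, w.2) := rfl
    rw [this, h2]
    show (w.1, _) = (u.1 + (w.1 - u.1), _)
    congr 1
    ring

lemma zline_eq (y : Cell) :
    zline ((1 : ℤ), -(l : ℤ)) y = colIdx n l ⁻¹' {colIdx n l y} := by
  ext z
  simp only [zline, Set.mem_setOf_eq, Set.mem_preimage, Set.mem_singleton_iff]
  constructor
  · rintro ⟨k, rfl⟩; exact colIdx_add_smul y k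
  · intro h
    rcases pr_eq_iff.mp ((pr_eq_iff_colIdx (n := n) (l := l)).mpr h.symm) with ⟨k, rfl⟩
    exact ⟨k, rfl⟩

lemma colIdx_surj (i : ℤ) : colIdx n l ((1 : ℤ), (n : ℤ) - i + 1) = i := by
  unfold colIdx; ring

lemma barCell_eq_pr (p : Cell) :
    barCell n l (colIdx n l p) = pr ((1 : ℤ), -(l : ℤ)) p := by
  unfold barCell
  rw [pr_eq_iff_colIdx (n := n) (l := l)]
  rw [colIdx_surj]

lemma barCell_injective : Function.Injective (barCell n l) := by
  intro i j h
  unfold barCell at h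
  rw [pr_eq_iff_colIdx (n := n) (l := l), colIdx_surj, colIdx_surj] at h
  exact h

lemma image_pre (S : Set ℤ) :
    pr ((1 : ℤ), -(l : ℤ)) '' (colIdx n l ⁻¹' S) = barCell n l '' S := by
  ext x
  constructor
  · rintro ⟨p, hp, rfl⟩
    exact ⟨colIdx n l p, hp, barCell_eq_pr p⟩
  · rintro ⟨i, hi, rfl⟩
    exact ⟨((1 : ℤ), (n : ℤ) - i + 1), by simpa [Set.mem_preimage, colIdx_surj] using hi,
      by rw [← barCell_eq_pr, colIdx_surj]⟩

lemma perDiag_const (c : ℤ) :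
    perDiag 1 l (fun _ => c) = colIdx n l ⁻¹' Set.Ici ((n : ℤ) + 1 - c) := by
  ext z
  simp only [perDiag, perClosure, lowerDiag, Set.mem_setOf_eq, Set.mem_preimage, Set.mem_Ici]
  constructor
  · rintro ⟨y, ⟨hy1, hy2, hy3⟩, k, rfl⟩
    rw [colIdx_add_smul]
    have : y.1 = 1 := le_antisymm hy2 hy1
    unfold colIdx
    rw [this]
    simp only [sub_self, zero_mul, add_zero]
    linarith
  · intro h
    refine ⟨((1 : ℤ), z.2 + (z.1 - 1) * (l : ℤ)), ⟨le_refl _, le_refl _, ?_⟩, z.1 - 1, ?_⟩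
    · unfold colIdx at h
      simp only
      linarith
    · rw [smul_omega]
      show z = (1 + (z.1 - 1), z.2 + (z.1 - 1) * (l : ℤ) + -((z.1 - 1) * l))
      have : z = (z.1, z.2) := rfl
      rw [this]
      congr 1 <;> ring

lemma colIdx_shift (p : Cell) (a b : ℤ) :
    colIdx n l (p + (a, b)) = colIdx n l p - b - a * (l : ℤ) := by
  show (n : ℤ) + 1 - ((p.2 + b) + (p.1 + a - 1) * (l : ℤ)) = _
  unfold colIdx
  ring

lemma lam_eq : perDiag 1 (l : ℤ) (fun _ => (n : ℤ)) = colIdx n l ⁻¹' Set.Ici 1 := by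
  rw [perDiag_const (n := n)]
  norm_num

lemma mu_eq : perDiag 1 (l : ℤ) (fun _ => (0 : ℤ)) = colIdx n l ⁻¹' Set.Ici ((n : ℤ) + 1) := by
  rw [perDiag_const (n := n)]
  norm_num

lemma step_forward {S : Set ℤ} {E' : Set Cell}
    (h : pExciteStep ((1 : ℤ), -(l : ℤ)) (perDiag 1 (l : ℤ) (fun _ => (n : ℤ)))
      (colIdx n l ⁻¹' S) E') :
    ∃ S', mstep l S S' ∧ E' = colIdx n l ⁻¹' S' := by
  obtain ⟨y, ⟨hyD, h10, h01, h11⟩, hE⟩ := h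
  rw [lam_eq] at h10 h01 h11
  have c10 : colIdx n l (y + (1, 0)) = colIdx n l y - (l : ℤ) := by rw [colIdx_shift]; ring
  have c01 : colIdx n l (y + (0, 1)) = colIdx n l y - 1 := by rw [colIdx_shift]; ring
  have c11 : colIdx n l (y + (1, 1)) = colIdx n l y - ((l : ℤ) + 1) := by rw [colIdx_shift]; ring
  obtain ⟨h10a, h10b⟩ := h10
  obtain ⟨h01a, h01b⟩ := h01
  obtain ⟨h11a, h11b⟩ := h11
  rw [Set.mem_preimage, c10] at h10a
  rw [Set.mem_preimage, c01] at h01a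
  rw [Set.mem_preimage, c11] at h11a
  rw [Set.mem_preimage, c10] at h10b
  rw [Set.mem_preimage, c01] at h01b
  rw [Set.mem_preimage, c11] at h11b
  rw [Set.mem_Ici] at h10a h01a h11a
  refine ⟨(S \ {colIdx n l y}) ∪ {colIdx n l y - ((l : ℤ) + 1)},
    ⟨colIdx n l y, hyD, by linarith, h01b, h10b, h11b, rfl⟩, ?_⟩
  rw [hE, zline_eq (n := n), zline_eq (n := n), c11, Set.preimage_union, Set.preimage_diff]

lemma step_backward {S S' : Set ℤ} (h : mstep l S S') :
    pExciteStep ((1 : ℤ), -(l : ℤ)) (perDiag 1 (l : ℤ) (fun _ => (n : ℤ)))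
      (colIdx n l ⁻¹' S) (colIdx n l ⁻¹' S') := by
  obtain ⟨i, h1, h2, h3, h4, h5, rfl⟩ := h
  set y : Cell := ((1 : ℤ), (n : ℤ) - i + 1) with hy
  have cy : colIdx n l y = i := colIdx_surj i
  have c10 : colIdx n l (y + (1, 0)) = i - (l : ℤ) := by rw [colIdx_shift, cy]; ring
  have c01 : colIdx n l (y + (0, 1)) = i - 1 := by rw [colIdx_shift, cy]; ring
  have c11 : colIdx n l (y + (1, 1)) = i - ((l : ℤ) + 1) := by rw [colIdx_shift, cy]; ring
  have hl0 : (0 : ℤ) ≤ (l : ℤ) := Int.natCast_nonneg l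
  refine ⟨y, ⟨?_, ?_, ?_, ?_⟩, ?_⟩
  · rw [Set.mem_preimage, cy]; exact h1
  · rw [lam_eq]
    exact ⟨by rw [Set.mem_preimage, c10, Set.mem_Ici]; linarith,
      by rw [Set.mem_preimage, c10]; exact h4⟩
  · rw [lam_eq]
    exact ⟨by rw [Set.mem_preimage, c01, Set.mem_Ici]; linarith,
      by rw [Set.mem_preimage, c01]; exact h3⟩
  · rw [lam_eq]
    exact ⟨by rw [Set.mem_preimage, c11, Set.mem_Ici]; linarith,
      by rw [Set.mem_preimage, c11]; exact h5⟩
  · rw [zline_eq (n := n), zline_eq (n := n), c11, cy, Set.preimage_union, Set.preimage_diff]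

lemma pexcited_iff {D : Set Cell} :
    D ∈ PExcitedSet ((1 : ℤ), -(l : ℤ)) (perDiag 1 (l : ℤ) fun _ => (n : ℤ))
        (perDiag 1 (l : ℤ) fun _ => (0 : ℤ)) ↔
      ∃ S, Relation.ReflTransGen (mstep l) (Set.Ici ((n : ℤ) + 1)) S ∧
        D = colIdx n l ⁻¹' S := by
  constructor
  · intro h
    induction h with
    | refl => exact ⟨Set.Ici ((n : ℤ) + 1), Relation.ReflTransGen.refl, (mu_eq).symm ▸ rfl⟩
    | tail hb hstep ih =>
      obtain ⟨S, hre, rfl⟩ := ih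
      obtain ⟨S', hm, hEeq⟩ := step_forward hstep
      exact ⟨S', hre.tail hm, hEeq⟩
  · rintro ⟨S, hre, rfl⟩
    show Relation.ReflTransGen _ _ _
    induction hre with
    | refl => rw [← mu_eq]
    | tail hb hstep ih => exact ih.tail (step_backward hstep)


end BarAux

/-- **Proposition 6.1**: `ψ` is a bijection from `E_{ℓ;n}` onto the set of
cylindric excited diagrams of `μ̂ = (0)^` in `λ̂ = (n)^`. -/
theorem bar_excited_diagram_bijection (n l q r : ℕ) (hn : 1 ≤ n) (hl : 1 ≤ l) (hr : r ≤ l)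
    (hdecomp : n = q * (l + 1) + r) :
    Set.BijOn (barPsi n l q r) (BarIndexSet l q r)
      (CylExcitedSet ((1 : ℤ), -(l : ℤ))
        (perDiag 1 l (fun _ => (n : ℤ))) (perDiag 1 l (fun _ => 0))) := by
  classical
  have hpsi : ∀ v : Fin q → ℤ, barPsi n l q r v = barCell n l '' BarAux.M l r v := by
    intro v
    have hcyl : cylDiag 1 (l : ℤ) (fun _ => (n : ℤ)) = barCell n l '' Set.Ici 1 := by
      show pr _ '' _ = _
      rw [BarAux.lam_eq (n := n), BarAux.image_pre]
    have hU : barSeg n l 1 (r : ℤ) ∪ ⋃ k : Fin q, barSeg n l (v k) (v k + (l : ℤ)) =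
        barCell n l '' BarAux.U l r v := by
      rw [BarAux.U, Set.image_union, Set.image_iUnion]
      rfl
    rw [barPsi, hcyl, hU, BarAux.M, ← Set.image_diff BarAux.barCell_injective]
  have hbase : BarAux.M l r (BarAux.vstar l r q) = Set.Ici ((n : ℤ) + 1) :=
    BarAux.M_vstar hl hdecomp
  have htarget : CylExcitedSet ((1 : ℤ), -(l : ℤ))
      (perDiag 1 l (fun _ => (n : ℤ))) (perDiag 1 l (fun _ => 0)) =
      barPsi n l q r '' BarIndexSet l q r := by
    ext X
    constructor
    · rintro ⟨D, hD, rfl⟩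
      rw [BarAux.pexcited_iff] at hD
      obtain ⟨S, hre, rfl⟩ := hD
      rw [← hbase] at hre
      obtain ⟨v, hv, rfl⟩ := BarAux.E_of_reach hl hr hre
      exact ⟨v, hv, (hpsi v).trans (BarAux.image_pre _).symm⟩
    · rintro ⟨v, hv, rfl⟩
      refine ⟨BarAux.colIdx n l ⁻¹' BarAux.M l r v, ?_, ((hpsi v).trans (BarAux.image_pre _).symm).symm⟩
      rw [BarAux.pexcited_iff]
      exact ⟨BarAux.M l r v, hbase ▸ BarAux.reach_of_E hl (BarAux.msum l r v) v hv rfl, rfl⟩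
  have hinj : Set.InjOn (barPsi n l q r) (BarIndexSet l q r) := by
    intro v hv w hw h
    rw [hpsi v, hpsi w] at h
    have hM : BarAux.M l r v = BarAux.M l r w :=
      (Set.image_injective.mpr BarAux.barCell_injective) h
    exact BarAux.U_inj hv hw (BarAux.U_eq_of_M_eq hv hw hM)
  rw [htarget]
  exact hinj.bijOn_image
end

section
/- Let ℓ,c,q ≥ 1 be integers and r ≥ 0 an integer, and let (a_i)_{i≥1} be a real sequence such that a_i ≠ 0 for all i ≥ 1, a_i → +∞ as i → ∞, and a_{i+ℓ} − a_i = c for all i ≥ 1. Then the family (1/Π_{v=1}^q Π_{u=0}^ℓ a_{i_v+u}), indexed by tuples (i_1,…,i_q) ∈ ℤ^q with i_1 ≥ r+1 and i_{k+1} − i_k ≥ ℓ+1 for 1 ≤ k ≤ q−1, is summable, and its sum equals 1/(q! · c^q · Π_{u=0}^{ℓq−1} a_{r+1+u}). -/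
open scoped BigOperators

/-- The index set of Lemma 6.2: tuples `(i_1,…,i_q) ∈ ℤ^q` with `i_1 ≥ r+1` and
`i_{k+1} − i_k ≥ ℓ+1`. -/
def TagawaIndex (l q r : ℕ) : Type :=
  {v : Fin q → ℤ //
    (∀ h : 0 < q, (r : ℤ) + 1 ≤ v ⟨0, h⟩) ∧
    ∀ (i : ℕ) (h : i + 1 < q),
      v ⟨i, Nat.lt_of_succ_lt h⟩ + (l : ℤ) + 1 ≤ v ⟨i + 1, h⟩}

/-! With `P(i, n) = a_i ⋯ a_{i+n-1}`, whenever `a_{i+d} - a_i = e ≠ 0` one has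
`1 / P(i, d+1) = (1/P(i, d) - 1/P(i+1, d)) / e`, so `∑_{i ≥ m} 1/P(i, d+1)` telescopes to
`1 / (e P(m, d))`, the tail vanishing because `P(i, d) → ∞`. Periodicity gives this for
`d = ℓp`, `e = pc`. Induct on `q`: fixing the first index `i`, the inner sum is
`1 / (q! c^q P(i+ℓ+1, ℓq))`, which together with `1/P(i, ℓ+1)` is `1 / (q! c^q P(i, ℓ(q+1)+1))`,
and the one-variable sum with `d = ℓ(q+1)`, `e = (q+1)c` finishes. Summability is absolute in
`ℝ`: the absolute values are dominated by a product of `q` copies of a summable one-variable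
family. -/

namespace Tagawa

open Filter Finset Topology

def blockProd (a : ℤ → ℝ) (i : ℤ) (n : ℕ) : ℝ := ∏ u ∈ range n, a (i + u)

variable {a : ℤ → ℝ}

theorem blockProd_add (i : ℤ) (n k : ℕ) :
    blockProd a i (n + k) = blockProd a i n * blockProd a (i + n) k := by
  simp only [blockProd, prod_range_add, Nat.cast_add, add_assoc]

theorem blockProd_succ (i : ℤ) (n : ℕ) : blockProd a i (n + 1) = blockProd a i n * a (i + n) :=
  prod_range_succ _ _

theorem blockProd_succ' (i : ℤ) (n : ℕ) : blockProd a i (n + 1) = a i * blockProd a (i + 1) n := by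
  rw [add_comm n, blockProd_add]
  simp [blockProd]

theorem blockProd_ne_zero (ha0 : ∀ i, 1 ≤ i → a i ≠ 0) {i : ℤ} (hi : 1 ≤ i) (n : ℕ) :
    blockProd a i n ≠ 0 :=
  prod_ne_zero_iff.mpr fun _ _ => ha0 _ (by omega)

theorem tendsto_blockProd (hatop : Tendsto a atTop atTop) :
    ∀ {n : ℕ}, n ≠ 0 → Tendsto (fun i => blockProd a i n) atTop atTop
  | 0, h => absurd rfl h
  | 1, _ => by simpa [blockProd] using hatop
  | n + 2, _ => by
    simp only [blockProd_succ _ (n + 1)]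
    exact (tendsto_blockProd hatop n.succ_ne_zero).atTop_mul_atTop₀
      (hatop.comp (tendsto_atTop_add_const_right _ _ tendsto_id))

theorem inv_blockProd_succ {i : ℤ} {d : ℕ} {e : ℝ} (he : e ≠ 0) (hde : a (i + d) - a i = e)
    (hP : blockProd a i (d + 1) ≠ 0) :
    (blockProd a i (d + 1))⁻¹ = e⁻¹ * ((blockProd a i d)⁻¹ - (blockProd a (i + 1) d)⁻¹) := by
  have h₁ := blockProd_succ (a := a) i d
  have h₂ := blockProd_succ' (a := a) i d
  obtain ⟨hPi, hai⟩ := mul_ne_zero_iff.mp (h₁ ▸ hP)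
  obtain ⟨hi, hPi'⟩ := mul_ne_zero_iff.mp (h₂ ▸ hP)
  field_simp
  linear_combination blockProd a i d * h₂ - blockProd a (i + 1) d * h₁
    - blockProd a i d * blockProd a (i + 1) d * hde

theorem hasSum_of_eventually_nonneg_of_tendsto {f : ℕ → ℝ} {L : ℝ} (hf : ∀ᶠ n in atTop, 0 ≤ f n)
    (h : Tendsto (fun n => ∑ i ∈ range n, f i) atTop (𝓝 L)) : HasSum f L := by
  obtain ⟨N, hN⟩ := eventually_atTop.mp hf
  rw [← hasSum_nat_add_iff' N, hasSum_iff_tendsto_nat_of_nonneg fun n => hN _ (by omega)]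
  refine ((h.comp (tendsto_add_atTop_nat N)).sub_const (∑ i ∈ range N, f i)).congr fun n => ?_
  simp only [Function.comp_apply, add_comm _ N, sum_range_add, add_sub_cancel_left]

theorem apply_add_mul_sub_apply {l : ℕ} {c : ℝ} (hper : ∀ i, 1 ≤ i → a (i + l) - a i = c)
    (p : ℕ) {i : ℤ} (hi : 1 ≤ i) : a (i + (l * p : ℕ)) - a i = p * c := by
  induction p with
  | zero => simp
  | succ p ih =>
    have h := hper (i + (l * p : ℕ)) (by omega)
    push_cast at h ih ⊢
    rw [mul_add, mul_one, ← add_assoc]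
    linarith

theorem hasSum_inv_blockProd_nat (ha0 : ∀ i, 1 ≤ i → a i ≠ 0) (hatop : Tendsto a atTop atTop)
    {d : ℕ} {e : ℝ} (he : e ≠ 0) (hde : ∀ i, 1 ≤ i → a (i + d) - a i = e) {m : ℤ} (hm : 1 ≤ m) :
    HasSum (fun n : ℕ => (blockProd a (m + n) (d + 1))⁻¹) (e * blockProd a m d)⁻¹ := by
  have hd : d ≠ 0 := by
    rintro rfl
    exact he (by simpa using (hde 1 le_rfl).symm)
  have hshift : Tendsto (fun n : ℕ => m + (n : ℤ)) atTop atTop :=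
    tendsto_atTop_add_const_left _ _ tendsto_natCast_atTop_atTop
  set T : ℕ → ℝ := fun n => (blockProd a (m + n) d)⁻¹
  have hterm (n : ℕ) : (blockProd a (m + n) (d + 1))⁻¹ = e⁻¹ * (T n - T (n + 1)) := by
    rw [inv_blockProd_succ he (hde _ (by omega)) (blockProd_ne_zero ha0 (by omega) _)]
    simp only [T, Nat.cast_succ, add_assoc]
  apply hasSum_of_eventually_nonneg_of_tendsto
  · filter_upwards [(tendsto_blockProd hatop d.succ_ne_zero).comp hshift
      |>.eventually_ge_atTop 0] with n hn using inv_nonneg.mpr hn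
  · have hT : Tendsto T atTop (𝓝 0) := ((tendsto_blockProd hatop hd).comp hshift).inv_tendsto_atTop
    simp_rw [hterm, ← mul_sum, sum_range_sub']
    convert (tendsto_const_nhds.sub hT).const_mul e⁻¹ using 2
    simp [T, mul_comm]

theorem hasSum_inv_blockProd (ha0 : ∀ i, 1 ≤ i → a i ≠ 0) (hatop : Tendsto a atTop atTop)
    {d : ℕ} {e : ℝ} (he : e ≠ 0) (hde : ∀ i, 1 ≤ i → a (i + d) - a i = e) {m : ℤ} (hm : 1 ≤ m) :
    HasSum (fun i : {i : ℤ // m ≤ i} => (blockProd a i (d + 1))⁻¹) (e * blockProd a m d)⁻¹ := by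
  let E : ℕ ≃ {i : ℤ // m ≤ i} := Equiv.ofBijective (fun n => ⟨m + n, by omega⟩)
    ⟨fun n n' h => by simpa using h, fun i => ⟨(i.1 - m).toNat, Subtype.ext (by simp; omega)⟩⟩
  exact E.hasSum_iff.mp (hasSum_inv_blockProd_nat ha0 hatop he hde hm)

theorem summable_prod_pi_of_nonneg {ι : Type*} {g : ι → ℝ} (hg0 : ∀ i, 0 ≤ g i)
    (hg : Summable g) : ∀ q : ℕ, Summable fun v : Fin q → ι => ∏ k, g (v k)
  | 0 => .of_finite
  | q + 1 => by
    have h := hg.mul_of_nonneg (summable_prod_pi_of_nonneg hg0 hg q) hg0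
      fun _ => prod_nonneg fun _ _ => hg0 _
    refine ((Fin.consEquiv fun _ => ι).symm.summable_iff.mpr h).congr fun v => ?_
    simp [Fin.prod_univ_succ, Fin.tail]

/-- `TagawaIndex l q r` is `SpacedTuples l q (r + 1)`; the recursion needs integer lower bounds. -/
abbrev SpacedTuples (l q : ℕ) (m : ℤ) : Type :=
  {v : Fin q → ℤ //
    (∀ h : 0 < q, m ≤ v ⟨0, h⟩) ∧
    ∀ (i : ℕ) (h : i + 1 < q), v ⟨i, Nat.lt_of_succ_lt h⟩ + (l : ℤ) + 1 ≤ v ⟨i + 1, h⟩}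

namespace SpacedTuples

variable {l q : ℕ} {m : ℤ}

theorem le_apply (v : SpacedTuples l q m) (k : Fin q) : m ≤ v.1 k := by
  obtain ⟨k, hk⟩ := k
  induction k with
  | zero => exact v.2.1 hk
  | succ k ih => linarith [v.2.2 k hk, ih (by omega)]

instance : Unique (SpacedTuples l 0 m) where
  default := ⟨Fin.elim0, fun h => absurd h (lt_irrefl 0), fun _ h => absurd h (by omega)⟩
  uniq _ := Subtype.ext (funext fun k => k.elim0)

def consEquiv :
    SpacedTuples l (q + 1) m ≃ Σ i : {i : ℤ // m ≤ i}, SpacedTuples l q (i + l + 1) where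
  toFun v := ⟨⟨v.1 0, v.2.1 q.succ_pos⟩,
    ⟨Fin.tail v.1, fun h => v.2.2 0 (by omega), fun i h => v.2.2 (i + 1) (by omega)⟩⟩
  invFun σ := ⟨Fin.cons σ.1.1 σ.2.1, fun _ => σ.1.2, fun
    | 0, h => σ.2.2.1 (by omega)
    | i + 1, h => σ.2.2.2 i (by omega)⟩
  left_inv v := Subtype.ext (Fin.cons_self_tail v.1)
  right_inv _ := rfl

theorem prod_consEquiv_symm {M : Type*} [CommMonoid M] (f : ℤ → M)
    (σ : Σ i : {i : ℤ // m ≤ i}, SpacedTuples l q (i + l + 1)) :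
    ∏ k, f ((consEquiv.symm σ).1 k) = f σ.1 * ∏ k, f (σ.2.1 k) :=
  Fin.prod_univ_succ _

end SpacedTuples

variable {l : ℕ} {c : ℝ}

theorem summable_spacedTuples (ha0 : ∀ i, 1 ≤ i → a i ≠ 0) (hatop : Tendsto a atTop atTop)
    (hc : c ≠ 0) (hper : ∀ i, 1 ≤ i → a (i + l) - a i = c) (q : ℕ) {m : ℤ} (hm : 1 ≤ m) :
    Summable fun v : SpacedTuples l q m => (∏ k, blockProd a (v.1 k) (l + 1))⁻¹ := by
  have hg := (hasSum_inv_blockProd ha0 hatop hc hper le_rfl).summable.abs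
  let ι : SpacedTuples l q m → Fin q → {i : ℤ // 1 ≤ i} :=
    fun v k => ⟨v.1 k, hm.trans (v.le_apply k)⟩
  have hι : ι.Injective := fun v w h =>
    Subtype.ext (funext fun k => congrArg Subtype.val (congrFun h k))
  refine .of_abs (((summable_prod_pi_of_nonneg (fun _ => abs_nonneg _) hg q).comp_injective
    hι).congr fun v => ?_)
  simp [ι, abs_prod, prod_inv_distrib]

theorem hasSum_spacedTuples (ha0 : ∀ i, 1 ≤ i → a i ≠ 0) (hatop : Tendsto a atTop atTop)
    (hc : c ≠ 0) (hper : ∀ i, 1 ≤ i → a (i + l) - a i = c) (q : ℕ) {m : ℤ} (hm : 1 ≤ m) :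
    HasSum (fun v : SpacedTuples l q m => (∏ k, blockProd a (v.1 k) (l + 1))⁻¹)
      (q.factorial * c ^ q * blockProd a m (l * q))⁻¹ := by
  induction q generalizing m with
  | zero => simp [blockProd]
  | succ q ih =>
    rw [← SpacedTuples.consEquiv.symm.hasSum_iff]
    have hqc : ((q + 1 : ℕ) : ℝ) * c ≠ 0 := mul_ne_zero (Nat.cast_ne_zero.mpr q.succ_ne_zero) hc
    have hsplit : ((q + 1).factorial * c ^ (q + 1) * blockProd a m (l * (q + 1)))⁻¹ =
        (q.factorial * c ^ q)⁻¹ * (((q + 1 : ℕ) : ℝ) * c * blockProd a m (l * (q + 1)))⁻¹ := by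
      rw [Nat.factorial_succ, Nat.cast_mul, pow_succ]
      simp only [mul_inv]
      ring
    rw [hsplit]
    refine HasSum.sigma_of_hasSum
      ((hasSum_inv_blockProd ha0 hatop hqc (fun i hi => apply_add_mul_sub_apply hper (q + 1) hi)
        hm).mul_left _) (fun i => ?_)
      (SpacedTuples.consEquiv.symm.summable_iff.mpr (summable_spacedTuples ha0 hatop hc hper _ hm))
    have hmerge : (blockProd a i (l + 1))⁻¹ *
        (q.factorial * c ^ q * blockProd a (i + l + 1) (l * q))⁻¹ =
        (q.factorial * c ^ q)⁻¹ * (blockProd a i (l * (q + 1) + 1))⁻¹ := by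
      rw [show l * (q + 1) + 1 = (l + 1) + l * q by ring, blockProd_add _ (l + 1), Nat.cast_succ,
        ← add_assoc]
      simp only [mul_inv]
      ring
    rw [← hmerge]
    refine ((ih (by omega)).mul_left _).congr_fun fun w => ?_
    rw [← mul_inv]
    exact congrArg Inv.inv (SpacedTuples.prod_consEquiv_symm (blockProd a · (l + 1)) ⟨i, w⟩)

end Tagawa

theorem tagawa_telescoping_lemma_general (l c q r : ℕ) (hc : 1 ≤ c)
    (a : ℤ → ℝ)
    (ha0 : ∀ i : ℤ, 1 ≤ i → a i ≠ 0)
    (hatop : Filter.Tendsto a Filter.atTop Filter.atTop)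
    (hper : ∀ i : ℤ, 1 ≤ i → a (i + (l : ℤ)) - a i = (c : ℝ)) :
    Summable (fun v : TagawaIndex l q r =>
      (∏ k : Fin q, ∏ u ∈ Finset.range (l + 1), a (v.1 k + (u : ℤ)))⁻¹) ∧
    (∑' v : TagawaIndex l q r,
        (∏ k : Fin q, ∏ u ∈ Finset.range (l + 1), a (v.1 k + (u : ℤ)))⁻¹) =
      ((q.factorial : ℝ) * (c : ℝ) ^ q *
        ∏ u ∈ Finset.range (l * q), a ((r : ℤ) + 1 + (u : ℤ)))⁻¹ := by
  have h := Tagawa.hasSum_spacedTuples ha0 hatop (Nat.cast_ne_zero.mpr (by omega)) hper q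
    (m := r + 1) (by omega)
  exact ⟨h.summable, h.tsum_eq⟩

/-- **Lemma 6.2 (Tagawa's lemma).** -/
theorem tagawa_telescoping_lemma (l c q r : ℕ) (hl : 1 ≤ l) (hc : 1 ≤ c) (hq : 1 ≤ q)
    (a : ℤ → ℝ)
    (ha0 : ∀ i : ℤ, 1 ≤ i → a i ≠ 0)
    (hatop : Filter.Tendsto a Filter.atTop Filter.atTop)
    (hper : ∀ i : ℤ, 1 ≤ i → a (i + (l : ℤ)) - a i = (c : ℝ)) :
    Summable (fun v : TagawaIndex l q r =>
      (∏ k : Fin q, ∏ u ∈ Finset.range (l + 1), a (v.1 k + (u : ℤ)))⁻¹) ∧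
    (∑' v : TagawaIndex l q r,
        (∏ k : Fin q, ∏ u ∈ Finset.range (l + 1), a (v.1 k + (u : ℤ)))⁻¹) =
      ((q.factorial : ℝ) * (c : ℝ) ^ q *
        ∏ u ∈ Finset.range (l * q), a ((r : ℤ) + 1 + (u : ℤ)))⁻¹ :=
  tagawa_telescoping_lemma_general l c q r hc a ha0 hatop hper
end

section
/- Let n,ℓ ≥ 1, let λ = (n) ∈ P_{1,ℓ} (so m = 1, ω = (1,−ℓ)), and set x_i := π(1, n−i+1) ∈ λ̂ for i ≥ 1. Then for all integers t ≥ 0 and 1 ≤ j ≤ ℓ, the cylindric hook length satisfies h_{λ̂}(x_{ℓt+j}) = (ℓ+1)t+j. -/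
open scoped BigOperators

lemma mem_perDiag_bar (n l : ℤ) (z : Cell) :
    z ∈ perDiag 1 l (fun _ => n) ↔ z.2 + (z.1 - 1) * l ≤ n := by
  constructor
  · rintro ⟨y, ⟨hy1, hy2, hy3⟩, k, rfl⟩
    have h1 : y.1 = 1 := le_antisymm hy2 hy1
    simp only [Prod.fst_add, Prod.snd_add, Prod.smul_fst, Prod.smul_snd, smul_eq_mul] at *
    rw [h1]
    nlinarith [hy3]
  · intro h
    refine ⟨(1, z.2 + (z.1 - 1) * l), ⟨le_refl 1, le_refl 1, h⟩, z.1 - 1, ?_⟩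
    ext <;> simp [Prod.smul_fst, Prod.smul_snd, smul_eq_mul] <;> ring

lemma hookSet_shift (Θ : Set Cell) (x v : Cell) (hΘ : ∀ z : Cell, z + v ∈ Θ ↔ z ∈ Θ) :
    hookSet Θ (x + v) = (· + v) '' hookSet Θ x := by
  ext z
  simp only [hookSet, Set.mem_inter_iff, Set.mem_union, Set.mem_setOf_eq, Set.mem_image]
  constructor
  · rintro ⟨hz, h⟩
    refine ⟨z - v, ⟨?_, ?_⟩, by abel⟩
    · have := (hΘ (z - v)).mp (by simpa using hz)
      exact this
    · rcases h with ⟨k, hk, he⟩ | ⟨k, hk, he⟩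
      · exact Or.inl ⟨k, hk, by rw [he]; abel⟩
      · exact Or.inr ⟨k, hk, by rw [he]; abel⟩
  · rintro ⟨w, ⟨hw, h⟩, rfl⟩
    refine ⟨(hΘ w).mpr hw, ?_⟩
    rcases h with ⟨k, hk, he⟩ | ⟨k, hk, he⟩
    · exact Or.inl ⟨k, hk, by rw [he]; abel⟩
    · exact Or.inr ⟨k, hk, by rw [he]; abel⟩

lemma hookLen_shift (Θ : Set Cell) (x v : Cell) (hΘ : ∀ z : Cell, z + v ∈ Θ ↔ z ∈ Θ) :
    hookLen Θ (x + v) = hookLen Θ x := by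
  unfold hookLen
  rw [hookSet_shift Θ x v hΘ,
    Set.ncard_image_of_injective _ (add_left_injective v)]

lemma cylHook_eq_hookLen (n l : ℤ) (x : Cell) :
    cylHook ((1 : ℤ), -l) (perDiag 1 l (fun _ => n)) (pr ((1 : ℤ), -l) x) =
      hookLen (perDiag 1 l (fun _ => n)) x := by
  set ω : Cell := ((1 : ℤ), -l) with hω
  have hout : pr ω (Quotient.out (pr ω x)) = pr ω x := Quotient.out_eq _
  have hmem : -(Quotient.out (pr ω x)) + x ∈ AddSubgroup.zmultiples ω :=
    (QuotientAddGroup.eq).mp hout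
  obtain ⟨k, hk⟩ := AddSubgroup.mem_zmultiples_iff.mp hmem
  have hx : Quotient.out (pr ω x) = x + (-k) • ω := by
    rw [neg_smul, hk]
    abel
  show hookLen (perDiag 1 l (fun _ => n)) (Quotient.out (pr ω x)) = _
  rw [hx]
  exact hookLen_shift _ x _ (by
    intro z
    rw [mem_perDiag_bar, mem_perDiag_bar]
    have : (z + (-k) • ω).2 + ((z + (-k) • ω).1 - 1) * l = z.2 + (z.1 - 1) * l := by
      simp only [Prod.fst_add, Prod.snd_add, Prod.smul_fst, Prod.smul_snd, smul_eq_mul, hω]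
      ring
    rw [this])

/-- The cylindric hook lengths of the bar diagram `λ̂ = (n)^` of period `(1,−ℓ)`:
`h_{λ̂}(x_{ℓt+j}) = (ℓ+1)t+j`, where `x_i = π(1, n−i+1)`. -/
theorem bar_cylindric_hook_lengths (n l : ℕ) (hn : 1 ≤ n) (hl : 1 ≤ l)
    (t j : ℕ) (hj1 : 1 ≤ j) (hj2 : j ≤ l) :
    cylHook ((1 : ℤ), -(l : ℤ)) (perDiag 1 l (fun _ => (n : ℤ)))
      (pr ((1 : ℤ), -(l : ℤ)) ((1 : ℤ), (n : ℤ) - ((l * t + j : ℕ) : ℤ) + 1)) =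
      (l + 1) * t + j := by
  have hl' : (1 : ℤ) ≤ l := by exact_mod_cast hl
  set i : ℤ := ((l * t + j : ℕ) : ℤ) with hi
  have hiv : i = (l : ℤ) * t + j := by push_cast [hi]; ring
  set x : Cell := ((1 : ℤ), (n : ℤ) - i + 1) with hxdef
  rw [cylHook_eq_hookLen]
  unfold hookLen
  have hset : hookSet (perDiag 1 (l : ℤ) (fun _ => (n : ℤ))) x =
      ↑(((Finset.Icc (0 : ℤ) (t : ℤ)).image (fun k => ((1 : ℤ) + k, (n : ℤ) - i + 1))) ∪
        ((Finset.Icc (1 : ℤ) (i - 1)).image (fun k => ((1 : ℤ), (n : ℤ) - i + 1 + k)))) := by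
    ext z
    simp only [hookSet, Set.mem_inter_iff, Set.mem_union, Set.mem_setOf_eq,
      mem_perDiag_bar, Finset.coe_union, Finset.coe_image, Set.mem_image,
      Finset.mem_coe, Finset.mem_Icc]
    constructor
    · rintro ⟨hz, ⟨k, hk, rfl⟩ | ⟨k, hk, rfl⟩⟩
      · left
        refine ⟨k, ⟨hk, ?_⟩, by ext <;> simp [hxdef]⟩
        simp only [hxdef, Prod.fst_add, Prod.snd_add] at hz
        by_contra hkt
        push_neg at hkt
        have h1 : (t : ℤ) + 1 ≤ k := hkt
        have h2 : ((t : ℤ) + 1) * l ≤ k * l := by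
          apply mul_le_mul_of_nonneg_right h1; linarith
        have hj2' : (j : ℤ) ≤ l := by exact_mod_cast hj2
        nlinarith [hz]
      · right
        refine ⟨k, ⟨hk, ?_⟩, by ext <;> simp [hxdef]⟩
        simp only [hxdef, Prod.fst_add, Prod.snd_add] at hz
        linarith
    · rintro (⟨k, ⟨hk0, hkt⟩, rfl⟩ | ⟨k, ⟨hk1, hki⟩, rfl⟩)
      · constructor
        · have h2 : k * l ≤ (t : ℤ) * l := by
            apply mul_le_mul_of_nonneg_right hkt; linarith
          have hj1' : (1 : ℤ) ≤ j := by exact_mod_cast hj1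
          simp only [hxdef]
          nlinarith
        · exact Or.inl ⟨k, hk0, by ext <;> simp [hxdef]⟩
      · constructor
        · simp only [hxdef]; linarith
        · exact Or.inr ⟨k, hk1, by ext <;> simp [hxdef]⟩
  rw [hset, Set.ncard_coe_finset]
  have hdisj : Disjoint ((Finset.Icc (0 : ℤ) (t : ℤ)).image
        (fun k => ((1 : ℤ) + k, (n : ℤ) - i + 1)))
      ((Finset.Icc (1 : ℤ) (i - 1)).image (fun k => ((1 : ℤ), (n : ℤ) - i + 1 + k))) := by
    rw [Finset.disjoint_left]
    rintro a ha hb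
    simp only [Finset.mem_image, Finset.mem_Icc] at ha hb
    obtain ⟨k1, hk1, rfl⟩ := ha
    obtain ⟨k2, hk2, he⟩ := hb
    have := congrArg Prod.snd he
    simp at this
    omega
  rw [Finset.card_union_of_disjoint hdisj,
    Finset.card_image_of_injective _ (by intro a b h; simpa [Prod.ext_iff] using h),
    Finset.card_image_of_injective _ (by intro a b h; simpa [Prod.ext_iff] using h),
    Int.card_Icc, Int.card_Icc]
  have hr : (l + 1) * t + j = l * t + t + j := by ring
  rw [hr]
  have hi' : i = ((l * t : ℕ) : ℤ) + (j : ℤ) := by rw [hi]; push_cast; ring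
  omega
end

section
/- Let ℓ,m ≥ 1, λ = ((ℓ+1)^m) and μ = (ℓ^{m−1},0), so that λ/μ = {(a,ℓ+1) : 1 ≤ a ≤ m−1} ∪ {(m,b) : 1 ≤ b ≤ ℓ+1} has n = ℓ+m cells. Then the number of ℓ-restricted reverse standard tableaux on λ/μ equals binom(ℓ+m−2, m−1), i.e. |RST_ℓ(λ/μ)| = binom(ℓ+m−2, m−1). -/
open scoped BigOperators

namespace HookRST

/-- The hook-case skew diagram. -/
def hS (l m : ℕ) : Set Cell :=
  skewDiag (m : ℤ) (fun _ => (l : ℤ) + 1) (fun a => if a = (m : ℤ) then 0 else (l : ℤ))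

lemma mem_hS {l m : ℕ} (hm : 1 ≤ m) {x : Cell} :
    x ∈ hS l m ↔ ((x.1 = (m : ℤ) ∧ 1 ≤ x.2 ∧ x.2 ≤ (l : ℤ) + 1) ∨
      (1 ≤ x.1 ∧ x.1 < (m : ℤ) ∧ x.2 = (l : ℤ) + 1)) := by
  by_cases h : x.1 = (m : ℤ) <;> simp [hS, skewDiag, h] <;> omega

def colC (l : ℕ) (a : ℤ) : Cell := (a, (l : ℤ) + 1)
def rowC (m : ℕ) (b : ℤ) : Cell := ((m : ℤ), b)

lemma colC_mem {l m : ℕ} {a : ℤ} (h1 : 1 ≤ a) (h2 : a ≤ (m : ℤ)) : colC l a ∈ hS l m := by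
  rw [mem_hS (by omega)]; simp [colC]; omega

lemma rowC_mem {l m : ℕ} (hm : 1 ≤ m) {b : ℤ} (h1 : 1 ≤ b) (h2 : b ≤ (l : ℤ) + 1) : rowC m b ∈ hS l m := by
  rw [mem_hS hm]; simp [rowC]; omega

lemma hS_cases {l m : ℕ} (hm : 1 ≤ m) {x : Cell} (hx : x ∈ hS l m) :
    x = rowC m 1 ∨ x = rowC m ((l : ℤ) + 1) ∨
      (∃ b : ℤ, 2 ≤ b ∧ b ≤ (l : ℤ) ∧ x = rowC m b) ∨
      (∃ a : ℤ, 1 ≤ a ∧ a ≤ (m : ℤ) - 1 ∧ x = colC l a) := by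
  rcases (mem_hS hm).1 hx with ⟨h1, h2, h3⟩ | ⟨h1, h2, h3⟩
  · by_cases hb1 : x.2 = 1
    · exact Or.inl (Prod.ext h1 hb1)
    · by_cases hb2 : x.2 = (l : ℤ) + 1
      · exact Or.inr (Or.inl (Prod.ext h1 hb2))
      · exact Or.inr (Or.inr (Or.inl ⟨x.2, by omega, by omega, Prod.ext h1 rfl⟩))
  · exact Or.inr (Or.inr (Or.inr ⟨x.1, h1, by omega, Prod.ext rfl h3⟩))

end HookRST
namespace HookRST

variable {l m : ℕ}

instance hS_dec (l m : ℕ) : DecidablePred (· ∈ hS l m) := fun x =>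
  inferInstanceAs (Decidable (1 ≤ x.1 ∧ x.1 ≤ (m : ℤ) ∧
    (if x.1 = (m : ℤ) then 0 else (l : ℤ)) < x.2 ∧ x.2 ≤ (l : ℤ) + 1))

/-- The value of a tableau on a cell, as a total function on cells. -/
def eC (ε : ↥(hS l m) → Fin (l + m)) (x : Cell) : ℕ :=
  if h : x ∈ hS l m then (ε ⟨x, h⟩).val else 0

section
variable {ε : ↥(hS l m) → Fin (l + m)} (hl : 1 ≤ l) (hm : 1 ≤ m)
variable (hε : IsRSTl m l (hS l m) (l + m) ε)

include hε

lemma eC_inj {x y : Cell} (hx : x ∈ hS l m) (hy : y ∈ hS l m) (h : eC ε x = eC ε y) :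
    x = y := by
  rw [eC, dif_pos hx, eC, dif_pos hy] at h
  have := hε.1.1.1 (Fin.ext h)
  exact congrArg Subtype.val this

lemma eC_lt_bound (x : Cell) (hx : x ∈ hS l m) : eC ε x < l + m := by
  rw [eC, dif_pos hx]; exact (ε ⟨x, hx⟩).isLt

lemma eC_surj {v : ℕ} (hv : v < l + m) : ∃ x ∈ hS l m, eC ε x = v := by
  obtain ⟨x, hx⟩ := hε.1.1.2 ⟨v, hv⟩
  exact ⟨x.1, x.2, by rw [eC, dif_pos x.2]; exact congrArg Fin.val hx⟩

lemma colStep {a : ℤ} (h1 : 1 ≤ a) (h2 : a + 1 ≤ (m : ℤ)) :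
    eC ε (colC l (a + 1)) < eC ε (colC l a) := by
  have p : colC l a ∈ hS l m := colC_mem h1 (by omega)
  have p' : colC l (a + 1) ∈ hS l m := colC_mem (by omega) h2
  simp only [eC]; rw [dif_pos p', dif_pos p]
  exact hε.1.2.2 ⟨colC l a, p⟩ ⟨colC l (a + 1), p'⟩ (by simp [colC, Prod.ext_iff])

lemma rowStep {b : ℤ} (h1 : 1 ≤ b) (h2 : b + 1 ≤ (l : ℤ) + 1) (hm : 1 ≤ m) :
    eC ε (rowC m (b + 1)) < eC ε (rowC m b) := by
  have p : rowC m b ∈ hS l m := rowC_mem hm h1 (by omega)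
  have p' : rowC m (b + 1) ∈ hS l m := rowC_mem hm (by omega) h2
  simp only [eC]; rw [dif_pos p', dif_pos p]
  exact hε.1.2.1 ⟨rowC m b, p⟩ ⟨rowC m (b + 1), p'⟩ (by simp [rowC, Prod.ext_iff])

lemma colLt {a : ℤ} (h1 : 1 ≤ a) :
    ∀ a', a + 1 ≤ a' → a' ≤ (m : ℤ) → eC ε (colC l a') < eC ε (colC l a) := by
  refine Int.le_induction ?_ ?_
  · intro h2; exact colStep hε h1 h2
  · intro n hn IH h2
    exact lt_trans (colStep hε (by omega) h2) (IH (by omega))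

lemma rowLt (hm : 1 ≤ m) {b : ℤ} (h1 : 1 ≤ b) :
    ∀ b', b + 1 ≤ b' → b' ≤ (l : ℤ) + 1 → eC ε (rowC m b') < eC ε (rowC m b) := by
  refine Int.le_induction ?_ ?_
  · intro h2; exact rowStep hε h1 h2 hm
  · intro n hn IH h2
    exact lt_trans (rowStep hε (by omega) h2 hm) (IH (by omega))

lemma crossLt (hm : 1 ≤ m) : eC ε (colC l 1) < eC ε (rowC m 1) := by
  have p : colC l 1 ∈ hS l m := colC_mem le_rfl (by omega)
  have q : rowC m 1 ∈ hS l m := rowC_mem hm le_rfl (by omega)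
  rw [eC, dif_pos p, eC, dif_pos q]
  exact hε.2 ⟨colC l 1, p⟩ ⟨rowC m 1, q⟩ rfl (by simp [colC, rowC, Prod.ext_iff])

lemma ltTop (hl : 1 ≤ l) (hm : 1 ≤ m) {x : Cell} (hx : x ∈ hS l m) (hne : x ≠ rowC m 1) :
    eC ε x < eC ε (rowC m 1) := by
  rcases hS_cases hm hx with h | h | ⟨b, hb1, hb2, h⟩ | ⟨a, ha1, ha2, h⟩
  · exact absurd h hne
  · rw [h]; exact rowLt hε hm le_rfl _ (by omega) (by omega)
  · rw [h]; exact rowLt hε hm le_rfl _ (by omega) (by omega)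
  · rw [h]
    rcases eq_or_lt_of_le ha1 with he | hgt
    · rw [← he]; exact crossLt hε hm
    · exact lt_trans (colLt hε le_rfl _ (by omega) (by omega)) (crossLt hε hm)

lemma gtBot (hl : 1 ≤ l) (hm : 1 ≤ m) {x : Cell} (hx : x ∈ hS l m) (hne : x ≠ rowC m ((l : ℤ) + 1)) :
    eC ε (rowC m ((l : ℤ) + 1)) < eC ε x := by
  rcases hS_cases hm hx with h | h | ⟨b, hb1, hb2, h⟩ | ⟨a, ha1, ha2, h⟩
  · rw [h]; exact rowLt hε hm le_rfl _ (by omega) (by omega)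
  · exact absurd h hne
  · rw [h]; exact rowLt hε hm (by omega : (1:ℤ) ≤ b) _ (by omega) (by omega)
  · rw [h]
    have : eC ε (colC l (m : ℤ)) < eC ε (colC l a) := colLt hε ha1 _ (by omega) le_rfl
    have he : colC l (m : ℤ) = rowC m ((l : ℤ) + 1) := rfl
    rwa [he] at this

lemma topEq (hl : 1 ≤ l) (hm : 1 ≤ m) : eC ε (rowC m 1) = l + m - 1 := by
  obtain ⟨x, hx, hv⟩ := eC_surj hε (show l + m - 1 < l + m by omega)
  by_cases h : x = rowC m 1
  · rw [← h, hv]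
  · have h2 := ltTop hε hl hm hx h
    have h3 := eC_lt_bound hε (rowC m 1) (rowC_mem hm le_rfl (by omega))
    omega

lemma botEq (hl : 1 ≤ l) (hm : 1 ≤ m) : eC ε (rowC m ((l : ℤ) + 1)) = 0 := by
  obtain ⟨x, hx, hv⟩ := eC_surj hε (show 0 < l + m by omega)
  by_cases h : x = rowC m ((l : ℤ) + 1)
  · rw [← h, hv]
  · have h2 := gtBot hε hl hm hx h
    omega

lemma valBound (hl : 1 ≤ l) (hm : 1 ≤ m) {x : Cell} (hx : x ∈ hS l m)
    (h1 : x ≠ rowC m 1) (h2 : x ≠ rowC m ((l : ℤ) + 1)) :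
    1 ≤ eC ε x ∧ eC ε x ≤ l + m - 2 := by
  have a1 := ltTop hε hl hm hx h1
  have a2 := gtBot hε hl hm hx h2
  rw [topEq hε hl hm] at a1
  rw [botEq hε hl hm] at a2
  omega

lemma colBound (hl : 1 ≤ l) (hm : 1 ≤ m) {a : ℤ} (h1 : 1 ≤ a) (h2 : a ≤ (m : ℤ) - 1) :
    1 ≤ eC ε (colC l a) ∧ eC ε (colC l a) ≤ l + m - 2 := by
  refine valBound hε hl hm (colC_mem h1 (by omega)) ?_ ?_ <;>
    · intro h; rw [colC, rowC, Prod.ext_iff] at h; simp at h; omega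

lemma rowBound (hl : 1 ≤ l) (hm : 1 ≤ m) {b : ℤ} (h1 : 2 ≤ b) (h2 : b ≤ (l : ℤ)) :
    1 ≤ eC ε (rowC m b) ∧ eC ε (rowC m b) ≤ l + m - 2 := by
  refine valBound hε hl hm (rowC_mem hm (by omega) (by omega)) ?_ ?_ <;>
    · intro h; rw [rowC, rowC, Prod.ext_iff] at h; simp at h; omega

end
end HookRST
namespace HookRST

variable {l m : ℕ} {ε : ↥(hS l m) → Fin (l + m)}

def colval (hl : 1 ≤ l) (hm : 1 ≤ m) (hε : IsRSTl m l (hS l m) (l + m) ε)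
    (i : Fin (m - 1)) : Fin (l + m - 2) :=
  ⟨eC ε (colC l ((i.1 : ℤ) + 1)) - 1, by
    have hb := colBound hε hl hm (a := (i.1 : ℤ) + 1) (by omega) (by have := i.2; omega)
    omega⟩

def rowval (hl : 1 ≤ l) (hm : 1 ≤ m) (hε : IsRSTl m l (hS l m) (l + m) ε)
    (j : Fin (l - 1)) : Fin (l + m - 2) :=
  ⟨eC ε (rowC m ((j.1 : ℤ) + 2)) - 1, by
    have hb := rowBound hε hl hm (b := (j.1 : ℤ) + 2) (by omega) (by have := j.2; omega)
    omega⟩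

section
variable (hl : 1 ≤ l) (hm : 1 ≤ m) (hε : IsRSTl m l (hS l m) (l + m) ε)

lemma colval_lt (i j : Fin (m - 1)) (h : i.1 < j.1) :
    (colval hl hm hε j).1 < (colval hl hm hε i).1 := by
  have h2 := colLt hε (a := (i.1 : ℤ) + 1) (by omega) ((j.1 : ℤ) + 1) (by omega)
    (by have := j.2; omega)
  have b1 := colBound hε hl hm (a := (j.1 : ℤ) + 1) (by omega) (by have := j.2; omega)
  show eC ε (colC l ((j.1 : ℤ) + 1)) - 1 < eC ε (colC l ((i.1 : ℤ) + 1)) - 1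
  omega

lemma rowval_lt (i j : Fin (l - 1)) (h : i.1 < j.1) :
    (rowval hl hm hε j).1 < (rowval hl hm hε i).1 := by
  have h2 := rowLt hε hm (b := (i.1 : ℤ) + 2) (by omega) ((j.1 : ℤ) + 2) (by omega)
    (by have := j.2; omega)
  have b1 := rowBound hε hl hm (b := (j.1 : ℤ) + 2) (by omega) (by have := j.2; omega)
  show eC ε (rowC m ((j.1 : ℤ) + 2)) - 1 < eC ε (rowC m ((i.1 : ℤ) + 2)) - 1
  omega

lemma colval_injective : Function.Injective (colval hl hm hε) := by
  intro i j h
  have hv := congrArg Fin.val h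
  rcases lt_trichotomy i.1 j.1 with hlt | heq | hgt
  · have := colval_lt hl hm hε i j hlt; omega
  · exact Fin.ext heq
  · have := colval_lt hl hm hε j i hgt; omega

lemma rowval_injective : Function.Injective (rowval hl hm hε) := by
  intro i j h
  have hv := congrArg Fin.val h
  rcases lt_trichotomy i.1 j.1 with hlt | heq | hgt
  · have := rowval_lt hl hm hε i j hlt; omega
  · exact Fin.ext heq
  · have := rowval_lt hl hm hε j i hgt; omega

def Timg : Finset (Fin (l + m - 2)) := Finset.image (colval hl hm hε) Finset.univ

lemma Timg_card : (Timg hl hm hε).card = m - 1 := by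
  rw [Timg, Finset.card_image_of_injective _ (colval_injective hl hm hε),
    Finset.card_univ, Fintype.card_fin]

lemma rowval_not_mem (j : Fin (l - 1)) : rowval hl hm hε j ∉ Timg hl hm hε := by
  rw [Timg, Finset.mem_image]
  rintro ⟨i, -, hi⟩
  have hv := congrArg Fin.val hi
  have b1 := colBound hε hl hm (a := (i.1 : ℤ) + 1) (by omega) (by have := i.2; omega)
  have b2 := rowBound hε hl hm (b := (j.1 : ℤ) + 2) (by omega) (by have := j.2; omega)
  have hval1 : (colval hl hm hε i).1 = eC ε (colC l ((i.1 : ℤ) + 1)) - 1 := rfl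
  have hval2 : (rowval hl hm hε j).1 = eC ε (rowC m ((j.1 : ℤ) + 2)) - 1 := rfl
  have he : eC ε (colC l ((i.1 : ℤ) + 1)) = eC ε (rowC m ((j.1 : ℤ) + 2)) := by omega
  have hcells := eC_inj hε (colC_mem (by omega) (by have := i.2; omega))
    (rowC_mem hm (by omega) (by have := j.2; omega)) he
  rw [colC, rowC, Prod.ext_iff] at hcells
  simp only at hcells
  have hi2 := i.2
  omega

lemma Timg_compl : (Timg hl hm hε)ᶜ = Finset.image (rowval hl hm hε) Finset.univ := by
  symm
  apply Finset.eq_of_subset_of_card_le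
  · intro v hv
    rw [Finset.mem_image] at hv
    obtain ⟨j, -, rfl⟩ := hv
    exact Finset.mem_compl.mpr (rowval_not_mem hl hm hε j)
  · rw [Finset.card_compl, Timg_card,
      Finset.card_image_of_injective _ (rowval_injective hl hm hε),
      Finset.card_univ, Fintype.card_fin, Fintype.card_fin]
    omega

end
end HookRST
namespace HookRST

variable {l m : ℕ}

lemma sc_card (s : Finset (Fin (l + m - 2))) (hs : s.card = m - 1) (hl : 1 ≤ l) (hm : 1 ≤ m) :
    sᶜ.card = l - 1 := by rw [Finset.card_compl, hs, Fintype.card_fin]; omega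

def sigV (s : Finset (Fin (l + m - 2))) (hs : s.card = m - 1) (k : ℕ) : ℕ :=
  if h : k < m - 1 then (s.orderEmbOfFin hs ⟨k, h⟩).val else 0

def tauV (s : Finset (Fin (l + m - 2))) (hs : s.card = m - 1) (hl : 1 ≤ l) (hm : 1 ≤ m)
    (k : ℕ) : ℕ :=
  if h : k < l - 1 then (sᶜ.orderEmbOfFin (sc_card s hs hl hm) ⟨k, h⟩).val else 0

section
variable (s : Finset (Fin (l + m - 2))) (hs : s.card = m - 1) (hl : 1 ≤ l) (hm : 1 ≤ m)

lemma sigV_bound {k : ℕ} (h : k < m - 1) : sigV s hs k < l + m - 2 := by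
  rw [sigV, dif_pos h]; exact (s.orderEmbOfFin hs ⟨k, h⟩).isLt

lemma tauV_bound {k : ℕ} (h : k < l - 1) : tauV s hs hl hm k < l + m - 2 := by
  rw [tauV, dif_pos h]; exact Fin.isLt _

lemma sigV_lt {k k' : ℕ} (h : k < k') (h' : k' < m - 1) : sigV s hs k < sigV s hs k' := by
  rw [sigV, dif_pos (by omega : k < m - 1), sigV, dif_pos h']
  exact (s.orderEmbOfFin hs).strictMono (Fin.mk_lt_mk.mpr h)

lemma tauV_lt {k k' : ℕ} (h : k < k') (h' : k' < l - 1) :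
    tauV s hs hl hm k < tauV s hs hl hm k' := by
  rw [tauV, dif_pos (by omega : k < l - 1), tauV, dif_pos h']
  exact (sᶜ.orderEmbOfFin _).strictMono (Fin.mk_lt_mk.mpr h)

lemma sigV_mem {k : ℕ} (h : k < m - 1) :
    (⟨sigV s hs k, sigV_bound s hs h⟩ : Fin (l + m - 2)) ∈ s := by
  have he : (⟨sigV s hs k, sigV_bound s hs h⟩ : Fin (l + m - 2)) =
      s.orderEmbOfFin hs ⟨k, h⟩ := by
    apply Fin.ext
    show sigV s hs k = _
    rw [sigV, dif_pos h]
  rw [he]; exact Finset.orderEmbOfFin_mem s hs _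

lemma tauV_mem {k : ℕ} (h : k < l - 1) :
    (⟨tauV s hs hl hm k, tauV_bound s hs hl hm h⟩ : Fin (l + m - 2)) ∈ sᶜ := by
  have he : (⟨tauV s hs hl hm k, tauV_bound s hs hl hm h⟩ : Fin (l + m - 2)) =
      sᶜ.orderEmbOfFin (sc_card s hs hl hm) ⟨k, h⟩ := by
    apply Fin.ext
    show tauV s hs hl hm k = _
    rw [tauV, dif_pos h]
  rw [he]; exact Finset.orderEmbOfFin_mem _ _ _

lemma sigV_ne_tauV {k j : ℕ} (hk : k < m - 1) (hj : j < l - 1) :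
    sigV s hs k ≠ tauV s hs hl hm j := by
  intro h
  have h1 := sigV_mem s hs hk
  have h2 := tauV_mem s hs hl hm hj
  rw [Finset.mem_compl] at h2
  exact h2 (by rwa [show (⟨tauV s hs hl hm j, tauV_bound s hs hl hm hj⟩ : Fin (l + m - 2)) =
    ⟨sigV s hs k, sigV_bound s hs hk⟩ from Fin.ext h.symm])

lemma sigV_inj {k k' : ℕ} (hk : k < m - 1) (hk' : k' < m - 1)
    (h : sigV s hs k = sigV s hs k') : k = k' := by
  rcases lt_trichotomy k k' with h1 | h1 | h1
  · have := sigV_lt s hs h1 hk'; omega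
  · exact h1
  · have := sigV_lt s hs h1 hk; omega

lemma tauV_inj {k k' : ℕ} (hk : k < l - 1) (hk' : k' < l - 1)
    (h : tauV s hs hl hm k = tauV s hs hl hm k') : k = k' := by
  rcases lt_trichotomy k k' with h1 | h1 | h1
  · have := tauV_lt s hs hl hm h1 hk'; omega
  · exact h1
  · have := tauV_lt s hs hl hm h1 hk; omega

lemma sigV_surj {v : Fin (l + m - 2)} (hv : v ∈ s) : ∃ k < m - 1, sigV s hs k = v.1 := by
  have hr : v ∈ Set.range (s.orderEmbOfFin hs) := by
    rw [Finset.range_orderEmbOfFin]; exact hv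
  obtain ⟨i, hi⟩ := hr
  refine ⟨i.1, i.2, ?_⟩
  rw [sigV, dif_pos i.2]
  exact congrArg Fin.val hi

lemma tauV_surj {v : Fin (l + m - 2)} (hv : v ∈ sᶜ) :
    ∃ k < l - 1, tauV s hs hl hm k = v.1 := by
  have hr : v ∈ Set.range (sᶜ.orderEmbOfFin (sc_card s hs hl hm)) := by
    rw [Finset.range_orderEmbOfFin]; exact hv
  obtain ⟨i, hi⟩ := hr
  refine ⟨i.1, i.2, ?_⟩
  rw [tauV, dif_pos i.2]
  exact congrArg Fin.val hi

/-- The canonical tableau value function built from a subset. -/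
def consV (x : Cell) : ℕ :=
  if x.1 = (m : ℤ) then
    if x.2 = 1 then l + m - 1
    else if x.2 = (l : ℤ) + 1 then 0
    else tauV s hs hl hm ((l : ℤ) - x.2).toNat + 1
  else sigV s hs ((m : ℤ) - x.1 - 1).toNat + 1

lemma consV_top : consV s hs hl hm (rowC m 1) = l + m - 1 := by
  simp [consV, rowC]

lemma consV_bot : consV s hs hl hm (rowC m ((l : ℤ) + 1)) = 0 := by
  have h1 : ((l : ℤ) + 1) ≠ 1 := by omega
  simp [consV, rowC, h1]

lemma consV_row {b : ℤ} (hb1 : 2 ≤ b) (hb2 : b ≤ (l : ℤ)) :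
    consV s hs hl hm (rowC m b) = tauV s hs hl hm ((l : ℤ) - b).toNat + 1 := by
  have h1 : b ≠ 1 := by omega
  have h2 : b ≠ (l : ℤ) + 1 := by omega
  simp [consV, rowC, h1, h2]

lemma consV_col {a : ℤ} (ha2 : a ≤ (m : ℤ) - 1) :
    consV s hs hl hm (colC l a) = sigV s hs ((m : ℤ) - a - 1).toNat + 1 := by
  have h1 : a ≠ (m : ℤ) := by omega
  simp [consV, colC, h1]

lemma consV_lt_bound (x : Cell) : consV s hs hl hm x < l + m := by
  rw [consV]
  split_ifs with h1 h2 h3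
  · omega
  · omega
  · rcases Nat.lt_or_ge (((l : ℤ) - x.2).toNat) (l - 1) with h | h
    · have := tauV_bound s hs hl hm h; omega
    · rw [tauV, dif_neg (by omega)]; omega
  · rcases Nat.lt_or_ge (((m : ℤ) - x.1 - 1).toNat) (m - 1) with h | h
    · have := sigV_bound s hs h; omega
    · rw [sigV, dif_neg (by omega)]; omega

end
end HookRST
namespace HookRST

variable {l m : ℕ}

section
variable (s : Finset (Fin (l + m - 2))) (hs : s.card = m - 1) (hl : 1 ≤ l) (hm : 1 ≤ m)

lemma consV_down {x : Cell} (hx : x ∈ hS l m) (hy : x + ((1 : ℤ), (0 : ℤ)) ∈ hS l m) :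
    consV s hs hl hm (x + ((1 : ℤ), (0 : ℤ))) < consV s hs hl hm x := by
  rcases hS_cases hm hx with rfl | rfl | ⟨b, hb1, hb2, rfl⟩ | ⟨a, ha1, ha2, rfl⟩
  · have hc : rowC m 1 + ((1 : ℤ), (0 : ℤ)) = ((m : ℤ) + 1, (1 : ℤ)) := by
      simp [rowC, Prod.ext_iff]
    rw [hc] at hy; rw [mem_hS hm] at hy; simp at hy
  · have hc : rowC m ((l : ℤ) + 1) + ((1 : ℤ), (0 : ℤ)) = ((m : ℤ) + 1, (l : ℤ) + 1) := by
      simp [rowC, Prod.ext_iff]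
    rw [hc] at hy; rw [mem_hS hm] at hy; simp at hy
  · have hc : rowC m b + ((1 : ℤ), (0 : ℤ)) = ((m : ℤ) + 1, b) := by
      simp [rowC, Prod.ext_iff]
    rw [hc] at hy; rw [mem_hS hm] at hy; simp at hy
  · have hc : colC l a + ((1 : ℤ), (0 : ℤ)) = colC l (a + 1) := by
      simp [colC, Prod.ext_iff]
    rw [hc]
    rcases eq_or_lt_of_le ha2 with he | hlt
    · have hc2 : colC l (a + 1) = rowC m ((l : ℤ) + 1) := by
        simp [colC, rowC, Prod.ext_iff]; omega
      rw [hc2, consV_bot, consV_col s hs hl hm ha2]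
      omega
    · rw [consV_col s hs hl hm (by omega), consV_col s hs hl hm ha2]
      have := sigV_lt s hs (k := ((m : ℤ) - (a + 1) - 1).toNat) (k' := ((m : ℤ) - a - 1).toNat)
        (by omega) (by omega)
      omega

lemma consV_right {x : Cell} (hx : x ∈ hS l m) (hy : x + ((0 : ℤ), (1 : ℤ)) ∈ hS l m) :
    consV s hs hl hm (x + ((0 : ℤ), (1 : ℤ))) < consV s hs hl hm x := by
  rcases hS_cases hm hx with rfl | rfl | ⟨b, hb1, hb2, rfl⟩ | ⟨a, ha1, ha2, rfl⟩
  · have hc : rowC m 1 + ((0 : ℤ), (1 : ℤ)) = rowC m 2 := by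
      simp [rowC, Prod.ext_iff]
    rw [hc, consV_top]
    rcases eq_or_lt_of_le hl with he | hl2
    · have hc2 : rowC m (2 : ℤ) = rowC m ((l : ℤ) + 1) := by
        simp [rowC, Prod.ext_iff]; omega
      rw [hc2, consV_bot]; omega
    · rw [consV_row s hs hl hm le_rfl (by omega)]
      have := tauV_bound s hs hl hm (k := ((l : ℤ) - 2).toNat) (by omega)
      omega
  · have hc : rowC m ((l : ℤ) + 1) + ((0 : ℤ), (1 : ℤ)) = ((m : ℤ), (l : ℤ) + 2) := by
      simp [rowC, Prod.ext_iff]; omega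
    rw [hc] at hy; rw [mem_hS hm] at hy; simp at hy
  · have hc : rowC m b + ((0 : ℤ), (1 : ℤ)) = rowC m (b + 1) := by
      simp [rowC, Prod.ext_iff]
    rw [hc, consV_row s hs hl hm hb1 hb2]
    rcases eq_or_lt_of_le hb2 with he | hlt
    · have hc2 : rowC m (b + 1) = rowC m ((l : ℤ) + 1) := by rw [he]
      rw [hc2, consV_bot]; omega
    · rw [consV_row s hs hl hm (by omega) (by omega)]
      have := tauV_lt s hs hl hm (k := ((l : ℤ) - (b + 1)).toNat) (k' := ((l : ℤ) - b).toNat)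
        (by omega) (by omega)
      omega
  · have hc : colC l a + ((0 : ℤ), (1 : ℤ)) = (a, (l : ℤ) + 2) := by
      simp [colC, Prod.ext_iff]; omega
    rw [hc] at hy; rw [mem_hS hm] at hy; simp at hy

lemma consV_res {x : Cell} (hx : x ∈ hS l m) (h1 : x.1 = 1)
    (hy : ((m : ℤ), x.2 - (l : ℤ)) ∈ hS l m) :
    consV s hs hl hm x < consV s hs hl hm ((m : ℤ), x.2 - (l : ℤ)) := by
  rcases hS_cases hm hx with rfl | rfl | ⟨b, hb1, hb2, rfl⟩ | ⟨a, ha1, ha2, rfl⟩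
  · rw [mem_hS hm] at hy; simp [rowC] at hy ⊢; omega
  · have hc : ((m : ℤ), (rowC m ((l : ℤ) + 1)).2 - (l : ℤ)) = rowC m 1 := by
      simp [rowC, Prod.ext_iff]
    rw [hc, consV_bot, consV_top]; omega
  · rw [mem_hS hm] at hy; simp [rowC] at hy ⊢; omega
  · simp only [colC] at h1
    subst h1
    have hc : ((m : ℤ), (colC l 1).2 - (l : ℤ)) = rowC m 1 := by
      simp [colC, rowC, Prod.ext_iff]
    rw [hc, consV_top, consV_col s hs hl hm ha2]
    have := sigV_bound s hs (k := ((m : ℤ) - 1 - 1).toNat) (by omega)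
    omega

lemma consV_inj {x y : Cell} (hx : x ∈ hS l m) (hy : y ∈ hS l m)
    (h : consV s hs hl hm x = consV s hs hl hm y) : x = y := by
  rcases hS_cases hm hx with rfl | rfl | ⟨b, hb1, hb2, rfl⟩ | ⟨a, ha1, ha2, rfl⟩ <;>
    rcases hS_cases hm hy with rfl | rfl | ⟨b', hb1', hb2', rfl⟩ | ⟨a', ha1', ha2', rfl⟩
  · rfl
  · rw [consV_top, consV_bot] at h; omega
  · rw [consV_top, consV_row s hs hl hm hb1' hb2'] at h
    have := tauV_bound s hs hl hm (k := ((l : ℤ) - b').toNat) (by omega); omega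
  · rw [consV_top, consV_col s hs hl hm ha2'] at h
    have := sigV_bound s hs (k := ((m : ℤ) - a' - 1).toNat) (by omega); omega
  · rw [consV_top, consV_bot] at h; omega
  · rfl
  · rw [consV_bot, consV_row s hs hl hm hb1' hb2'] at h; omega
  · rw [consV_bot, consV_col s hs hl hm ha2'] at h; omega
  · rw [consV_top, consV_row s hs hl hm hb1 hb2] at h
    have := tauV_bound s hs hl hm (k := ((l : ℤ) - b).toNat) (by omega); omega
  · rw [consV_bot, consV_row s hs hl hm hb1 hb2] at h; omega
  · rw [consV_row s hs hl hm hb1 hb2, consV_row s hs hl hm hb1' hb2'] at h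
    have := tauV_inj s hs hl hm (k := ((l : ℤ) - b).toNat) (k' := ((l : ℤ) - b').toNat)
      (by omega) (by omega) (by omega)
    rw [show b = b' by omega]
  · rw [consV_row s hs hl hm hb1 hb2, consV_col s hs hl hm ha2'] at h
    have := sigV_ne_tauV s hs hl hm (k := ((m : ℤ) - a' - 1).toNat)
      (j := ((l : ℤ) - b).toNat) (by omega) (by omega)
    omega
  · rw [consV_top, consV_col s hs hl hm ha2] at h
    have := sigV_bound s hs (k := ((m : ℤ) - a - 1).toNat) (by omega); omega
  · rw [consV_bot, consV_col s hs hl hm ha2] at h; omega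
  · rw [consV_row s hs hl hm hb1' hb2', consV_col s hs hl hm ha2] at h
    have := sigV_ne_tauV s hs hl hm (k := ((m : ℤ) - a - 1).toNat)
      (j := ((l : ℤ) - b').toNat) (by omega) (by omega)
    omega
  · rw [consV_col s hs hl hm ha2, consV_col s hs hl hm ha2'] at h
    have := sigV_inj s hs (k := ((m : ℤ) - a - 1).toNat) (k' := ((m : ℤ) - a' - 1).toNat)
      (by omega) (by omega) (by omega)
    rw [show a = a' by omega]

lemma consV_surj {v : ℕ} (hv : v < l + m) : ∃ x ∈ hS l m, consV s hs hl hm x = v := by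
  rcases Nat.eq_or_lt_of_le (Nat.succ_le_of_lt hv) with he | hlt
  · exact ⟨rowC m 1, rowC_mem hm le_rfl (by omega), by rw [consV_top]; omega⟩
  rcases Nat.eq_zero_or_pos v with rfl | hv1
  · exact ⟨rowC m ((l : ℤ) + 1), rowC_mem hm (by omega) le_rfl, consV_bot s hs hl hm⟩
  have hw : v - 1 < l + m - 2 := by omega
  by_cases hmem : (⟨v - 1, hw⟩ : Fin (l + m - 2)) ∈ s
  · obtain ⟨k, hk, hkv⟩ := sigV_surj s hs hmem
    refine ⟨colC l ((m : ℤ) - 1 - k), colC_mem (by omega) (by omega), ?_⟩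
    rw [consV_col s hs hl hm (by omega)]
    rw [show ((m : ℤ) - ((m : ℤ) - 1 - k) - 1).toNat = k by omega]
    simp only [] at hkv
    omega
  · obtain ⟨k, hk, hkv⟩ := tauV_surj s hs hl hm (Finset.mem_compl.mpr hmem)
    refine ⟨rowC m ((l : ℤ) - k), rowC_mem hm (by omega) (by omega), ?_⟩
    rw [consV_row s hs hl hm (by omega) (by omega)]
    rw [show ((l : ℤ) - ((l : ℤ) - k)).toNat = k by omega]
    simp only [] at hkv
    omega

/-- The canonical tableau built from a subset. -/
def consF : ↥(hS l m) → Fin (l + m) := fun x =>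
  ⟨consV s hs hl hm x.1, consV_lt_bound s hs hl hm x.1⟩

lemma eC_consF (x : Cell) (hx : x ∈ hS l m) :
    eC (consF s hs hl hm) x = consV s hs hl hm x := by
  rw [eC, dif_pos hx]; rfl

lemma consF_valid : IsRSTl m l (hS l m) (l + m) (consF s hs hl hm) := by
  refine ⟨⟨⟨?_, ?_⟩, ?_, ?_⟩, ?_⟩
  · intro x y h
    exact Subtype.ext (consV_inj s hs hl hm x.2 y.2 (congrArg Fin.val h))
  · intro v
    obtain ⟨x, hx, hxv⟩ := consV_surj s hs hl hm v.isLt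
    exact ⟨⟨x, hx⟩, Fin.ext hxv⟩
  · intro x y hxy
    show consV s hs hl hm (y : Cell) < consV s hs hl hm (x : Cell)
    rw [hxy]
    exact consV_right s hs hl hm x.2 (by rw [← hxy]; exact y.2)
  · intro x y hxy
    show consV s hs hl hm (y : Cell) < consV s hs hl hm (x : Cell)
    rw [hxy]
    exact consV_down s hs hl hm x.2 (by rw [← hxy]; exact y.2)
  · intro x y h1 hxy
    show consV s hs hl hm (x : Cell) < consV s hs hl hm (y : Cell)
    rw [hxy]
    exact consV_res s hs hl hm x.2 h1 (by rw [← hxy]; exact y.2)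

end
end HookRST
namespace HookRST

variable {l m : ℕ}

section
variable (hl : 1 ≤ l) (hm : 1 ≤ m) {ε : ↥(hS l m) → Fin (l + m)}
variable (hε : IsRSTl m l (hS l m) (l + m) ε)

lemma eC_val (x : ↥(hS l m)) : eC ε (x : Cell) = (ε x).val := by
  rw [eC, dif_pos x.2]

lemma colval_val {k : ℕ} (hk : k < m - 1) :
    (colval hl hm hε ⟨k, hk⟩).1 = eC ε (colC l ((k : ℤ) + 1)) - 1 := rfl

lemma rowval_val {k : ℕ} (hk : k < l - 1) :
    (rowval hl hm hε ⟨k, hk⟩).1 = eC ε (rowC m ((k : ℤ) + 2)) - 1 := rfl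

lemma sigV_Timg {k : ℕ} (hk : k < m - 1) :
    sigV (Timg hl hm hε) (Timg_card hl hm hε) k
      = (colval hl hm hε ⟨m - 2 - k, by omega⟩).1 := by
  let f : Fin (m - 1) → Fin (l + m - 2) := fun j =>
    colval hl hm hε ⟨m - 2 - j.1, by have := j.2; omega⟩
  have hmono : StrictMono f := by
    intro i j hij
    have h1 : i.1 < j.1 := Fin.lt_def.1 hij
    have h2 := j.2
    have h3 := i.2
    exact Fin.lt_def.mpr (colval_lt hl hm hε ⟨m - 2 - j.1, by omega⟩ ⟨m - 2 - i.1, by omega⟩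
      (show m - 2 - j.1 < m - 2 - i.1 by omega))
  have hmem : ∀ j, f j ∈ Timg hl hm hε := fun j =>
    Finset.mem_image.mpr ⟨⟨m - 2 - j.1, by have := j.2; omega⟩, Finset.mem_univ _, rfl⟩
  have huniq := Finset.orderEmbOfFin_unique (Timg_card hl hm hε) hmem hmono
  rw [sigV, dif_pos hk, ← huniq]

lemma tauV_Timg {k : ℕ} (hk : k < l - 1) :
    tauV (Timg hl hm hε) (Timg_card hl hm hε) hl hm k
      = (rowval hl hm hε ⟨l - 2 - k, by omega⟩).1 := by
  let g : Fin (l - 1) → Fin (l + m - 2) := fun j =>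
    rowval hl hm hε ⟨l - 2 - j.1, by have := j.2; omega⟩
  have hmono : StrictMono g := by
    intro i j hij
    have h1 : i.1 < j.1 := Fin.lt_def.1 hij
    have h2 := j.2
    have h3 := i.2
    exact Fin.lt_def.mpr (rowval_lt hl hm hε ⟨l - 2 - j.1, by omega⟩ ⟨l - 2 - i.1, by omega⟩
      (show l - 2 - j.1 < l - 2 - i.1 by omega))
  have hmem : ∀ j, g j ∈ (Timg hl hm hε)ᶜ := by
    intro j
    rw [Timg_compl hl hm hε]
    exact Finset.mem_image.mpr ⟨⟨l - 2 - j.1, by have := j.2; omega⟩, Finset.mem_univ _, rfl⟩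
  have huniq := Finset.orderEmbOfFin_unique
    (sc_card (Timg hl hm hε) (Timg_card hl hm hε) hl hm) hmem hmono
  rw [tauV, dif_pos hk, ← huniq]

/-- Reconstruction: the canonical tableau of the column-value set is the tableau itself. -/
lemma consF_Timg : consF (Timg hl hm hε) (Timg_card hl hm hε) hl hm = ε := by
  funext x
  apply Fin.ext
  show consV (Timg hl hm hε) (Timg_card hl hm hε) hl hm (x : Cell) = (ε x).val
  rw [← eC_val x]
  rcases hS_cases hm x.2 with hc | hc | ⟨b, hb1, hb2, hc⟩ | ⟨a, ha1, ha2, hc⟩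
  · rw [hc, consV_top, topEq hε hl hm]
  · rw [hc, consV_bot, botEq hε hl hm]
  · rw [hc, consV_row _ _ hl hm hb1 hb2]
    have hk : ((l : ℤ) - b).toNat < l - 1 := by omega
    have hk2 : l - 2 - ((l : ℤ) - b).toNat < l - 1 := by omega
    rw [tauV_Timg hl hm hε hk, rowval_val hl hm hε hk2,
      show ((l - 2 - ((l : ℤ) - b).toNat : ℕ) : ℤ) + 2 = b by omega]
    have hb := rowBound hε hl hm hb1 hb2
    omega
  · rw [hc, consV_col _ _ hl hm ha2]
    have hk : ((m : ℤ) - a - 1).toNat < m - 1 := by omega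
    have hk2 : m - 2 - ((m : ℤ) - a - 1).toNat < m - 1 := by omega
    rw [sigV_Timg hl hm hε hk, colval_val hl hm hε hk2,
      show ((m - 2 - ((m : ℤ) - a - 1).toNat : ℕ) : ℤ) + 1 = a by omega]
    have hb := colBound hε hl hm ha1 ha2
    omega

end

section
variable (s : Finset (Fin (l + m - 2))) (hs : s.card = m - 1) (hl : 1 ≤ l) (hm : 1 ≤ m)

lemma colval_consF {k : ℕ} (hk : k < m - 1) :
    (colval hl hm (consF_valid s hs hl hm) ⟨k, hk⟩).1 = sigV s hs (m - 2 - k) := by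
  rw [colval_val hl hm (consF_valid s hs hl hm) hk,
    eC_consF s hs hl hm _ (colC_mem (by omega) (by omega)),
    consV_col s hs hl hm (by omega),
    show ((m : ℤ) - ((k : ℤ) + 1) - 1).toNat = m - 2 - k by omega]
  omega

/-- The column-value set of the canonical tableau of `s` is `s`. -/
lemma Timg_consF : Timg hl hm (consF_valid s hs hl hm) = s := by
  apply Finset.ext
  intro v
  rw [Timg, Finset.mem_image]
  constructor
  · rintro ⟨i, -, rfl⟩
    have hk : m - 2 - i.1 < m - 1 := by have := i.2; omega
    have he : colval hl hm (consF_valid s hs hl hm) i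
        = ⟨sigV s hs (m - 2 - i.1), sigV_bound s hs hk⟩ :=
      Fin.ext (colval_consF s hs hl hm i.2)
    rw [he]
    exact sigV_mem s hs hk
  · intro hv
    obtain ⟨k, hk, hkv⟩ := sigV_surj s hs hv
    have hk2 : m - 2 - k < m - 1 := by omega
    refine ⟨⟨m - 2 - k, hk2⟩, Finset.mem_univ _, ?_⟩
    apply Fin.ext
    rw [colval_consF s hs hl hm hk2, show m - 2 - (m - 2 - k) = k by omega]
    exact hkv

end
end HookRST
/-- The number of `ℓ`-restricted reverse standard tableaux of the hook-case skew shape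
`λ/μ` with `λ = ((ℓ+1)^m)`, `μ = (ℓ^{m−1},0)` is `C(ℓ+m−2, m−1)`. -/
theorem hook_case_restricted_rst_count (l m : ℕ) (hl : 1 ≤ l) (hm : 1 ≤ m) :
    Nat.card {ε : ↥(skewDiag (m : ℤ) (fun _ => (l : ℤ) + 1)
        (fun a => if a = (m : ℤ) then 0 else (l : ℤ))) → Fin (l + m) //
      IsRSTl m l (skewDiag (m : ℤ) (fun _ => (l : ℤ) + 1)
        (fun a => if a = (m : ℤ) then 0 else (l : ℤ))) (l + m) ε} =
      (l + m - 2).choose (m - 1) := by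
  have e : {ε : ↥(HookRST.hS l m) → Fin (l + m) //
      IsRSTl m l (HookRST.hS l m) (l + m) ε} ≃
      {s : Finset (Fin (l + m - 2)) // s.card = m - 1} :=
    { toFun := fun p => ⟨HookRST.Timg hl hm p.2, HookRST.Timg_card hl hm p.2⟩
      invFun := fun q => ⟨HookRST.consF q.1 q.2 hl hm, HookRST.consF_valid q.1 q.2 hl hm⟩
      left_inv := fun p => Subtype.ext (HookRST.consF_Timg hl hm p.2)
      right_inv := fun q => Subtype.ext (HookRST.Timg_consF q.1 q.2 hl hm) }
  calc Nat.card {ε : ↥(HookRST.hS l m) → Fin (l + m) //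
        IsRSTl m l (HookRST.hS l m) (l + m) ε}
      = Nat.card {s : Finset (Fin (l + m - 2)) // s.card = m - 1} := Nat.card_congr e
    _ = (l + m - 2).choose (m - 1) := by
        rw [Nat.card_eq_fintype_card, Fintype.card_finset_len, Fintype.card_fin]
end
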